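/- arXiv:1705.03073 — 9 statements merged into one kernel-verified Lean document; each statement's English description precedes it below -/
import Mathlib

section
/- Let m > 0, X > 0, let K : [0,X]×[0,X] → ℝ be continuous and positive, and let y : [0,X] → ℝ be a continuous nonnegative solution of y(x)^{m+1} = ∫_0^x K(x,t) y(t) dt for all x ∈ [0,X]. Fix N ∈ ℕ, N ≥ 2, set h = X/N and x_n = n·h, let w_{n,i} > 0 be quadrature weights, and let (y_n)_{n≥1} be the nonnegative sequence defined by a starting value y_1 ≥ 0 and y_n = (h · ∑_{i=1}^{n-1} w_{n,i} K(x_n,x_i) y_i)^{1/(m+1)} for 2 ≤ n ≤ N. Define the local consistency errors δ_n := ∫_0^{x_n} K(x_n,t) y(t) dt − h · ∑_{i=1}^{n-1} w_{n,i} K(x_n,x_i) y(x_i). If δ_n ≥ 0 for all n = 1,…,N and y(h) ≥ y_1, then y(n·h) ≥ y_n for all n = 1,…,N. -/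
/-!
The scheme is a monotone recursion: each new value is the `(m+1)`-st root of a nonnegative
combination of the previous ones. Nonnegative consistency errors say that the exact solution
is a supersolution of that recursion, so by strong induction the numerical values stay below it.
-/

theorem natCast_mul_div_mem_Icc {X : ℝ} (hX : 0 ≤ X) {i N : ℕ} (hi : i ≤ N) :
    (i : ℝ) * (X / N) ∈ Set.Icc 0 X := by
  refine ⟨by positivity, ?_⟩
  rcases N.eq_zero_or_pos with rfl | hN
  · simpa using hX
  · calc (i : ℝ) * (X / N) ≤ N * (X / N) := by gcongr
      _ = X := by field_simp

theorem nonneg_and_le_of_rpow_recursion {p : ℝ} (hp : 0 < p) {N : ℕ} (c : ℕ → ℕ → ℝ)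
    (u v : ℕ → ℝ) (hc : ∀ n i, 1 ≤ i → i < n → n ≤ N → 0 ≤ c n i)
    (hu₁ : 0 ≤ u 1) (huv₁ : u 1 ≤ v 1)
    (hu : ∀ n, 2 ≤ n → n ≤ N → u n = (∑ i ∈ Finset.Ico 1 n, c n i * u i) ^ (1 / p))
    (hv : ∀ n, 2 ≤ n → n ≤ N → 0 ≤ v n ∧ ∑ i ∈ Finset.Ico 1 n, c n i * v i ≤ v n ^ p) :
    ∀ n, 1 ≤ n → n ≤ N → 0 ≤ u n ∧ u n ≤ v n := by
  -- `Real.rpow` at a negative base is not a root, so `0 ≤ u n` must be carried along.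
  intro n
  induction n using Nat.strong_induction_on with
  | _ n ih =>
    intro hn1 hnN
    rcases hn1.eq_or_lt with rfl | hn2
    · exact ⟨hu₁, huv₁⟩
    have hprev : ∀ i ∈ Finset.Ico 1 n, 0 ≤ c n i ∧ 0 ≤ u i ∧ u i ≤ v i := fun i hi => by
      obtain ⟨hi1, hin⟩ := Finset.mem_Ico.mp hi
      exact ⟨hc n i hi1 hin hnN, ih i hin hi1 (hin.le.trans hnN)⟩
    have hsum_nonneg : 0 ≤ ∑ i ∈ Finset.Ico 1 n, c n i * u i :=
      Finset.sum_nonneg fun i hi => mul_nonneg (hprev i hi).1 (hprev i hi).2.1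
    have hsum_le : ∑ i ∈ Finset.Ico 1 n, c n i * u i ≤ v n ^ p :=
      (Finset.sum_le_sum fun i hi => mul_le_mul_of_nonneg_left (hprev i hi).2.2 (hprev i hi).1).trans
        (hv n hn2 hnN).2
    rw [hu n hn2 hnN, one_div]
    exact ⟨Real.rpow_nonneg hsum_nonneg _,
      (Real.rpow_inv_le_iff_of_pos hsum_nonneg (hv n hn2 hnN).1 hp).2 hsum_le⟩

theorem stmt0_general
    (m X : ℝ) (hm : 0 < m) (hX : 0 < X)
    (K : ℝ → ℝ → ℝ)
    (hKpos : ∀ x ∈ Set.Icc (0 : ℝ) X, ∀ t ∈ Set.Icc (0 : ℝ) X, 0 < K x t)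
    (y : ℝ → ℝ)
    (hynonneg : ∀ x ∈ Set.Icc (0 : ℝ) X, 0 ≤ y x)
    (hsol : ∀ x ∈ Set.Icc (0 : ℝ) X, y x ^ (m + 1) = ∫ t in (0 : ℝ)..x, K x t * y t)
    (N : ℕ)
    (h : ℝ) (hh : h = X / N)
    (w : ℕ → ℕ → ℝ)
    (hw : ∀ n i : ℕ, 0 < w n i)
    (yd : ℕ → ℝ)
    (hyd1 : 0 ≤ yd 1)
    (hscheme : ∀ n : ℕ, 2 ≤ n → n ≤ N →
      yd n = (h * ∑ i ∈ Finset.Ico 1 n, w n i * K ((n : ℝ) * h) ((i : ℝ) * h) * yd i)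
        ^ (1 / (m + 1)))
    (hδ : ∀ n : ℕ, 1 ≤ n → n ≤ N →
      0 ≤ (∫ t in (0 : ℝ)..((n : ℝ) * h), K ((n : ℝ) * h) t * y t)
        - h * ∑ i ∈ Finset.Ico 1 n, w n i * K ((n : ℝ) * h) ((i : ℝ) * h) * y ((i : ℝ) * h))
    (hinit : yd 1 ≤ y h) :
    ∀ n : ℕ, 1 ≤ n → n ≤ N → yd n ≤ y ((n : ℝ) * h) := by
  subst hh
  have hnode : ∀ i ≤ N, (i : ℝ) * (X / N) ∈ Set.Icc 0 X := fun i hi =>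
    natCast_mul_div_mem_Icc hX.le hi
  set c : ℕ → ℕ → ℝ := fun n i => X / N * (w n i * K (n * (X / N)) (i * (X / N))) with hc
  have hsum_mul : ∀ n (f : ℕ → ℝ),
      X / N * ∑ i ∈ Finset.Ico 1 n, w n i * K (n * (X / N)) (i * (X / N)) * f i
        = ∑ i ∈ Finset.Ico 1 n, c n i * f i := fun n f => by
    simp only [hc, Finset.mul_sum, mul_assoc]
  have hc_nonneg : ∀ n i, 1 ≤ i → i < n → n ≤ N → 0 ≤ c n i := fun n i _ hin hnN =>
    mul_nonneg (by positivity)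
      (mul_pos (hw n i) (hKpos _ (hnode n hnN) _ (hnode i (hin.le.trans hnN)))).le
  have hrec : ∀ n, 2 ≤ n → n ≤ N → yd n = (∑ i ∈ Finset.Ico 1 n, c n i * yd i) ^ (1 / (m + 1)) :=
    fun n hn2 hnN => by rw [hscheme n hn2 hnN, hsum_mul]
  have hsuper : ∀ n, 2 ≤ n → n ≤ N → 0 ≤ y (n * (X / N)) ∧
      ∑ i ∈ Finset.Ico 1 n, c n i * y (i * (X / N)) ≤ y (n * (X / N)) ^ (m + 1) :=
    fun n hn2 hnN => ⟨hynonneg _ (hnode n hnN), by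
      rw [← hsum_mul, hsol _ (hnode n hnN)]
      linarith [hδ n (by omega) hnN]⟩
  exact fun n hn1 hnN => (nonneg_and_le_of_rpow_recursion (by linarith) c yd
    (fun n => y (n * (X / N))) hc_nonneg hyd1 (by simpa using hinit) hrec hsuper n hn1 hnN).2

/-- monotone comparison between the exact solution and the explicit
finite-difference scheme when all local consistency errors are nonnegative. -/
theorem stmt0
    (m X : ℝ) (hm : 0 < m) (hX : 0 < X)
    (K : ℝ → ℝ → ℝ)
    (hKcont : ContinuousOn (fun p : ℝ × ℝ => K p.1 p.2) (Set.Icc 0 X ×ˢ Set.Icc 0 X))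
    (hKpos : ∀ x ∈ Set.Icc (0 : ℝ) X, ∀ t ∈ Set.Icc (0 : ℝ) X, 0 < K x t)
    (y : ℝ → ℝ)
    (hycont : ContinuousOn y (Set.Icc 0 X))
    (hynonneg : ∀ x ∈ Set.Icc (0 : ℝ) X, 0 ≤ y x)
    (hsol : ∀ x ∈ Set.Icc (0 : ℝ) X, y x ^ (m + 1) = ∫ t in (0 : ℝ)..x, K x t * y t)
    (N : ℕ) (hN : 2 ≤ N)
    (h : ℝ) (hh : h = X / N)
    (w : ℕ → ℕ → ℝ)
    (hw : ∀ n i : ℕ, 0 < w n i)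
    (yd : ℕ → ℝ)
    (hyd1 : 0 ≤ yd 1)
    (hscheme : ∀ n : ℕ, 2 ≤ n → n ≤ N →
      yd n = (h * ∑ i ∈ Finset.Ico 1 n, w n i * K ((n : ℝ) * h) ((i : ℝ) * h) * yd i)
        ^ (1 / (m + 1)))
    (hδ : ∀ n : ℕ, 1 ≤ n → n ≤ N →
      0 ≤ (∫ t in (0 : ℝ)..((n : ℝ) * h), K ((n : ℝ) * h) t * y t)
        - h * ∑ i ∈ Finset.Ico 1 n, w n i * K ((n : ℝ) * h) ((i : ℝ) * h) * y ((i : ℝ) * h))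
    (hinit : yd 1 ≤ y h) :
    ∀ n : ℕ, 1 ≤ n → n ≤ N → yd n ≤ y ((n : ℝ) * h) :=
  stmt0_general m X hm hX K hKpos y hynonneg hsol N h hh w hw yd hyd1 hscheme hδ hinit
end

section
/- Let m, μ, ν, C > 0 and let y : [0,1] → ℝ be a continuous positive function such that y(x)^{m+1} ≥ C · x^μ · ∫_0^x t^ν y(t) dt for all x ∈ [0,1]. Then for all x ∈ [0,1], y(x) ≥ (C · (m/(m+1)) · 1/(1 + ν + μ/(m+1)))^{1/m} · x^{(1+ν+μ)/m}. -/
/-!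
Put `z x = ∫₀ˣ tᵛ y(t) dt`, `p = m/(m+1)` and `β = 1 + ν + μ/(m+1)`. The hypothesis says
`C xᵘ z ≤ y^(m+1)`, so `z' = xᵛ y ≥ C^(1-p) x^(β-1) z^(1-p)`: a Bernoulli-type differential
inequality, which makes `z^p - (p C^(1-p)/β) x^β` nondecreasing and hence nonnegative.
Raising the hypothesis to the power `p` and inserting this lower bound for `z^p` gives
`(C p/β) x^(1+ν+μ) ≤ y^m`, because `C^p C^(1-p) = C`.
-/

open Real Set intervalIntegral

theorem rpow_inv_mul_rpow_div_le {a x w r s : ℝ} (ha : 0 ≤ a) (hx : 0 ≤ x) (hw : 0 ≤ w)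
    (hs : 0 < s) (h : a * x ^ r ≤ w ^ s) : a ^ s⁻¹ * x ^ (r / s) ≤ w := by
  rw [div_eq_mul_inv, rpow_mul hx, ← mul_rpow ha (rpow_nonneg hx r)]
  exact (rpow_inv_le_iff_of_pos (by positivity) hw hs).2 h

theorem hasDerivAt_integral_of_continuousOn {f : ℝ → ℝ} {a b x : ℝ}
    (hf : ContinuousOn f (Icc a b)) (hx : x ∈ Ioo a b) :
    HasDerivAt (fun u => ∫ t in a..u, f t) (f x) x := by
  have hf' : ContinuousOn f (Ioo a b) := hf.mono Ioo_subset_Icc_self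
  refine integral_hasDerivAt_right ((hf.mono ?_).intervalIntegrable)
    (hf'.stronglyMeasurableAtFilter isOpen_Ioo x hx) (hf'.continuousAt (isOpen_Ioo.mem_nhds hx))
  rw [uIcc_of_le hx.1.le]
  exact Icc_subset_Icc le_rfl hx.2.le

theorem continuousOn_integral_of_continuousOn {f : ℝ → ℝ} {a b : ℝ} (hab : a ≤ b)
    (hf : ContinuousOn f (Icc a b)) : ContinuousOn (fun u => ∫ t in a..u, f t) (Icc a b) := by
  rw [← uIcc_of_le hab] at hf ⊢
  exact continuousOn_primitive_interval (hf.integrableOn_compact isCompact_uIcc)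

theorem mul_rpow_le_rpow_of_le_deriv {z z' : ℝ → ℝ} {b A γ p : ℝ} (hγ : 0 < γ) (hp : 0 < p)
    (hcont : ContinuousOn z (Icc 0 b)) (hz0 : z 0 = 0) (hpos : ∀ x ∈ Ioo 0 b, 0 < z x)
    (hderiv : ∀ x ∈ Ioo 0 b, HasDerivAt z (z' x) x)
    (hle : ∀ x ∈ Ioo 0 b, A * x ^ (γ - 1) * z x ^ (1 - p) ≤ z' x) :
    ∀ x ∈ Icc 0 b, p * A / γ * x ^ γ ≤ z x ^ p := by
  set g : ℝ → ℝ := fun x => z x ^ p - p * A / γ * x ^ γ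
  have hg' : ∀ x ∈ Ioo 0 b,
      HasDerivAt g (z' x * p * z x ^ (p - 1) - p * A / γ * (γ * x ^ (γ - 1))) x := fun x hx =>
    ((hderiv x hx).rpow_const (Or.inl (hpos x hx).ne')).sub
      ((hasDerivAt_rpow_const (Or.inl hx.1.ne')).const_mul _)
  have hg'_nonneg : ∀ x ∈ Ioo 0 b,
      0 ≤ z' x * p * z x ^ (p - 1) - p * A / γ * (γ * x ^ (γ - 1)) := by
    intro x hx
    have hzx := hpos x hx
    have hcancel : z x ^ (1 - p) * z x ^ (p - 1) = 1 := by
      rw [← rpow_add hzx, sub_add_sub_cancel', sub_self, rpow_zero]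
    rw [sub_nonneg]
    calc p * A / γ * (γ * x ^ (γ - 1))
        = p * A * x ^ (γ - 1) * (z x ^ (1 - p) * z x ^ (p - 1)) := by
          rw [hcancel]; field_simp
      _ = A * x ^ (γ - 1) * z x ^ (1 - p) * (p * z x ^ (p - 1)) := by ring
      _ ≤ z' x * (p * z x ^ (p - 1)) := by gcongr; exact hle x hx
      _ = z' x * p * z x ^ (p - 1) := by ring
  have hmono : MonotoneOn g (Icc 0 b) := by
    refine monotoneOn_of_deriv_nonneg (convex_Icc 0 b) ?_ ?_ ?_
    · exact (hcont.rpow_const fun _ _ => Or.inr hp.le).sub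
        (continuousOn_const.mul (continuousOn_id.rpow_const fun _ _ => Or.inr hγ.le))
    · rw [interior_Icc]
      exact fun x hx => (hg' x hx).differentiableAt.differentiableWithinAt
    · rw [interior_Icc]
      exact fun x hx => (hg' x hx).deriv ▸ hg'_nonneg x hx
  intro x hx
  have h := hmono ⟨le_rfl, hx.1.trans hx.2⟩ hx hx.1
  simp only [g, hz0, zero_rpow hp.ne', zero_rpow hγ.ne', mul_zero, sub_zero] at h
  linarith

theorem mul_rpow_le_integral_rpow {m μ ν C b : ℝ} {y : ℝ → ℝ} (hm : 0 < m) (hμ : 0 ≤ μ)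
    (hν : 0 ≤ ν) (hC : 0 ≤ C) (hycont : ContinuousOn y (Icc 0 b))
    (hypos : ∀ x ∈ Icc 0 b, 0 < y x)
    (hineq : ∀ x ∈ Icc 0 b, C * x ^ μ * ∫ t in (0 : ℝ)..x, t ^ ν * y t ≤ y x ^ (m + 1)) :
    ∀ x ∈ Icc 0 b, m / (m + 1) * C ^ (m + 1)⁻¹ / (1 + ν + μ / (m + 1)) * x ^ (1 + ν + μ / (m + 1))
      ≤ (∫ t in (0 : ℝ)..x, t ^ ν * y t) ^ (m / (m + 1)) := by
  have hm1 : 0 < m + 1 := by linarith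
  have hfcont : ContinuousOn (fun t => t ^ ν * y t) (Icc 0 b) :=
    (continuousOn_id.rpow_const fun _ _ => Or.inr hν).mul hycont
  have hcompl : 1 - m / (m + 1) = (m + 1)⁻¹ := by field_simp; ring
  refine mul_rpow_le_rpow_of_le_deriv (by positivity) (by positivity) ?_ integral_same ?_
    (fun x hx => hasDerivAt_integral_of_continuousOn hfcont hx) ?_
  · rcases le_total 0 b with hb | hb
    · exact continuousOn_integral_of_continuousOn hb hfcont
    · exact (subsingleton_Icc_of_ge hb).continuousOn _
  · intro x hx
    refine intervalIntegral_pos_of_pos_on (hfcont.mono ?_).intervalIntegrable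
      (fun t ht => mul_pos (rpow_pos_of_pos ht.1 ν) (hypos t ⟨ht.1.le, ht.2.le.trans hx.2.le⟩)) hx.1
    rw [uIcc_of_le hx.1.le]
    exact Icc_subset_Icc le_rfl hx.2.le
  · intro x hx
    set z := ∫ t in (0 : ℝ)..x, t ^ ν * y t
    have hx0 : 0 < x := hx.1
    have hxIcc : x ∈ Icc 0 b := ⟨hx.1.le, hx.2.le⟩
    have hz : 0 ≤ z := integral_nonneg hx.1.le fun t ht =>
      mul_nonneg (rpow_nonneg ht.1 ν) (hypos t ⟨ht.1, ht.2.trans hx.2.le⟩).le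
    have hy : (C * x ^ μ * z) ^ (m + 1)⁻¹ ≤ y x :=
      (rpow_inv_le_iff_of_pos (by positivity) (hypos x hxIcc).le hm1).2 (hineq x hxIcc)
    have hxpow : x ^ (1 + ν + μ / (m + 1) - 1) = x ^ ν * (x ^ μ) ^ (m + 1)⁻¹ := by
      rw [← rpow_mul hx0.le, ← rpow_add hx0]
      ring_nf
    calc C ^ (m + 1)⁻¹ * x ^ (1 + ν + μ / (m + 1) - 1) * z ^ (1 - m / (m + 1))
        = x ^ ν * (C * x ^ μ * z) ^ (m + 1)⁻¹ := by
          rw [hxpow, hcompl, mul_rpow (by positivity) hz, mul_rpow hC (by positivity)]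
          ring
      _ ≤ x ^ ν * y x := by gcongr

theorem rpow_mul_rpow_le_of_mul_le_rpow {m μ ν C x z w : ℝ} (hm : 0 < m) (hμ : 0 ≤ μ)
    (hν : 0 ≤ ν) (hC : 0 < C) (hx : 0 ≤ x) (hz : 0 ≤ z) (hw : 0 ≤ w)
    (hzw : C * x ^ μ * z ≤ w ^ (m + 1))
    (hlow : m / (m + 1) * C ^ (m + 1)⁻¹ / (1 + ν + μ / (m + 1)) * x ^ (1 + ν + μ / (m + 1))
      ≤ z ^ (m / (m + 1))) :
    (C * (m / (m + 1)) * (1 / (1 + ν + μ / (m + 1)))) ^ (1 / m) * x ^ ((1 + ν + μ) / m) ≤ w := by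
  have hm1 : 0 < m + 1 := by linarith
  set p := m / (m + 1) with hp
  set β := 1 + ν + μ / (m + 1) with hβ
  have hCpow : C ^ p * C ^ (m + 1)⁻¹ = C := by
    rw [← rpow_add hC, hp, show m / (m + 1) + (m + 1)⁻¹ = 1 by field_simp, rpow_one]
  have hxpow : x ^ (μ * p) * x ^ β = x ^ (1 + ν + μ) := by
    rw [← rpow_add' hx (by positivity), hp, hβ]
    congr 1
    field_simp
    ring
  rw [one_div m]
  refine rpow_inv_mul_rpow_div_le (by positivity) hx hw hm ?_
  calc C * p * (1 / β) * x ^ (1 + ν + μ)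
      = (C ^ p * C ^ (m + 1)⁻¹) * p / β * (x ^ (μ * p) * x ^ β) := by
        rw [hCpow, hxpow]
        ring
    _ = C ^ p * x ^ (μ * p) * (p * C ^ (m + 1)⁻¹ / β * x ^ β) := by ring
    _ ≤ C ^ p * x ^ (μ * p) * z ^ p := by gcongr
    _ = (C * x ^ μ * z) ^ p := by
        rw [mul_rpow (by positivity) hz, mul_rpow hC.le (by positivity), rpow_mul hx]
    _ ≤ (w ^ (m + 1)) ^ p := rpow_le_rpow (by positivity) hzw (by positivity)
    _ = w ^ m := by rw [← rpow_mul hw, hp, mul_div_cancel₀ _ hm1.ne']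

/-- Gronwall–Bellman type comparison lemma, lower bound version. -/
theorem stmt2
    (m μ ν C : ℝ) (hm : 0 < m) (hμ : 0 < μ) (hν : 0 < ν) (hC : 0 < C)
    (y : ℝ → ℝ)
    (hycont : ContinuousOn y (Set.Icc 0 1))
    (hypos : ∀ x ∈ Set.Icc (0 : ℝ) 1, 0 < y x)
    (hineq : ∀ x ∈ Set.Icc (0 : ℝ) 1,
      C * x ^ μ * ∫ t in (0 : ℝ)..x, t ^ ν * y t ≤ y x ^ (m + 1)) :
    ∀ x ∈ Set.Icc (0 : ℝ) 1,
      (C * (m / (m + 1)) * (1 / (1 + ν + μ / (m + 1)))) ^ (1 / m)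
        * x ^ ((1 + ν + μ) / m) ≤ y x := by
  intro x hx
  have hz : 0 ≤ ∫ t in (0 : ℝ)..x, t ^ ν * y t := integral_nonneg hx.1 fun t ht =>
    mul_nonneg (rpow_nonneg ht.1 ν) (hypos t ⟨ht.1, ht.2.trans hx.2⟩).le
  exact rpow_mul_rpow_le_of_mul_le_rpow hm hμ.le hν.le hC hx.1 hz (hypos x hx).le (hineq x hx)
    (mul_rpow_le_integral_rpow hm hμ.le hν.le hC.le hycont hypos hineq x hx)
end

section
/- Let m ≥ 1, h > 0, C > 0, ε ≥ 0 with (m+1)/m · ε · h^{−(m+1)/m} ≤ 1, and N ∈ ℕ. Let w_{n,i} > 0 be weights and K_{n,i} ≥ C real numbers for 1 ≤ i < n ≤ N, and suppose the quadrature errors for the function t ↦ t^{1/m} satisfy, for every 2 ≤ n ≤ N, h · ∑_{i=1}^{n-1} w_{n,i} (i·h)^{1/m} ≥ ∫_0^{n·h} t^{1/m} dt − ε_n with ε_n ≤ ε. Let (y_n) be a sequence of nonnegative numbers satisfying y_n^{m+1} = h · ∑_{i=1}^{n-1} w_{n,i} K_{n,i} y_i for 2 ≤ n ≤ N. If y_1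 ≥ (1 − ((m+1)/m) · ε · h^{−(1+1/m)}) · (C · (m/(m+1)) · h)^{1/m}, then for every 2 ≤ n ≤ N, y_n ≥ (1 − ((m+1)/m) · ε · h^{−(1+1/m)}) · (C · (m/(m+1)) · n·h)^{1/m}. -/
/-!
By strong induction, `y n ≥ L · (A · n h) ^ (1/m)` with `A = C m/(m+1)` and
`L = 1 - (m+1)/m · ε · h^(-(1+1/m))`. Feeding the induction hypothesis into the scheme and using
the quadrature bound gives `y n ^ (m+1) ≥ C L A^(1/m) (m/(m+1) · (n h)^(1+1/m) - ε)`. Since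
`n ≥ 1`, the error `ε` is at most the fraction `1 - L` of the exact integral, so
`y n ^ (m+1) ≥ L² (A n h)^((m+1)/m)`, and `L^(m+1) ≤ L²` for `0 ≤ L ≤ 1`, `m ≥ 1` closes the step.
-/

open Real Set intervalIntegral

lemma integral_zero_rpow {r : ℝ} (hr : -1 < r) (b : ℝ) :
    ∫ t in (0 : ℝ)..b, t ^ r = b ^ (r + 1) / (r + 1) := by
  rw [integral_rpow (Or.inl hr), zero_rpow (by linarith), sub_zero]

lemma mul_le_of_sq_mul_rpow_le {L z y p : ℝ} (hL0 : 0 ≤ L) (hL1 : L ≤ 1) (hz : 0 ≤ z)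
    (hy : 0 ≤ y) (hp : 2 ≤ p) (h : L ^ 2 * z ^ p ≤ y ^ p) : L * z ≤ y := by
  have hLp : L ^ p ≤ L ^ (2 : ℝ) := rpow_le_rpow_of_exponent_ge' hL0 hL1 zero_le_two hp
  rw [rpow_two] at hLp
  refine (rpow_le_rpow_iff (mul_nonneg hL0 hz) hy (by linarith : (0 : ℝ) < p)).mp ?_
  calc (L * z) ^ p = L ^ p * z ^ p := mul_rpow hL0 hz
    _ ≤ L ^ 2 * z ^ p := mul_le_mul_of_nonneg_right hLp (rpow_nonneg hz p)
    _ ≤ y ^ p := h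

lemma mul_sum_le_sum_mul_mul {ι : Type*} {s : Finset ι} {C : ℝ} {w K g y : ι → ℝ}
    (hC : 0 ≤ C) (hw : ∀ i ∈ s, 0 ≤ w i) (hK : ∀ i ∈ s, C ≤ K i) (hg : ∀ i ∈ s, 0 ≤ g i)
    (hgy : ∀ i ∈ s, g i ≤ y i) :
    C * ∑ i ∈ s, w i * g i ≤ ∑ i ∈ s, w i * K i * y i := by
  rw [Finset.mul_sum]
  refine Finset.sum_le_sum fun i hi => ?_
  calc C * (w i * g i) = w i * (C * g i) := by ring
    _ ≤ w i * (K i * y i) :=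
      mul_le_mul_of_nonneg_left (mul_le_mul (hK i hi) (hgy i hi) (hg i hi) ((hC.trans (hK i hi))))
        (hw i hi)
    _ = w i * K i * y i := (mul_assoc _ _ _).symm

lemma le_scaled_error_mul_rpow_of_one_le {m h ε x : ℝ} (hm : 0 < m) (hh : 0 < h) (hε : 0 ≤ ε)
    (hx : 1 ≤ x) :
    ε ≤ (m + 1) / m * ε * h ^ (-(1 + 1 / m)) * (m / (m + 1) * (x * h) ^ (1 + 1 / m)) := by
  have hx_pow : 1 ≤ x ^ (1 + 1 / m) := one_le_rpow hx (by positivity)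
  rw [mul_rpow (by linarith) hh.le]
  have hcancel : h ^ (-(1 + 1 / m)) * h ^ (1 + 1 / m) = 1 := by
    rw [← rpow_add hh, neg_add_cancel, rpow_zero]
  have hm_cancel : (m + 1) / m * (m / (m + 1)) = 1 := by field_simp
  generalize 1 + 1 / m = q at *
  calc ε ≤ ε * x ^ q := le_mul_of_one_le_right hε hx_pow
    _ = _ := by
      linear_combination (-(ε * x ^ q)) * hcancel
        + (-(ε * x ^ q * (h ^ (-q) * h ^ q))) * hm_cancel

lemma lower_bound_step {m h C ε L : ℝ} (hm : 1 ≤ m) (hh : 0 < h) (hC : 0 < C) (hL0 : 0 ≤ L)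
    (hL1 : L ≤ 1) {n : ℕ} {w K y : ℕ → ℝ}
    (hw : ∀ i ∈ Finset.Ico 1 n, 0 < w i) (hK : ∀ i ∈ Finset.Ico 1 n, C ≤ K i)
    (hy : ∀ i ∈ Finset.Ico 1 n, L * (C * (m / (m + 1)) * ((i : ℝ) * h)) ^ (1 / m) ≤ y i)
    (hyn : 0 ≤ y n)
    (hquad : (∫ t in (0 : ℝ)..((n : ℝ) * h), t ^ (1 / m)) - ε
      ≤ h * ∑ i ∈ Finset.Ico 1 n, w i * ((i : ℝ) * h) ^ (1 / m))
    (habsorb : ε ≤ (1 - L) * (m / (m + 1) * ((n : ℝ) * h) ^ (1 + 1 / m)))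
    (hscheme : y n ^ (m + 1) = h * ∑ i ∈ Finset.Ico 1 n, w i * K i * y i) :
    L * (C * (m / (m + 1)) * ((n : ℝ) * h)) ^ (1 / m) ≤ y n := by
  have hm0 : 0 < m := one_pos.trans_le hm
  set A := C * (m / (m + 1)) with hA_def
  have hA : 0 < A := by positivity
  set X := (n : ℝ) * h
  have hX : 0 ≤ X := by positivity
  set S := ∑ i ∈ Finset.Ico 1 n, w i * ((i : ℝ) * h) ^ (1 / m)
  have hint : ∫ t in (0 : ℝ)..X, t ^ (1 / m) = m / (m + 1) * X ^ (1 + 1 / m) := by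
    rw [integral_zero_rpow (by linarith [one_div_pos.mpr hm0]), add_comm (1 / m)]
    field_simp
  have hquad_rel : L * (m / (m + 1) * X ^ (1 + 1 / m)) ≤ h * S := by
    rw [hint] at hquad; linarith
  have hsum : C * (L * A ^ (1 / m) * S) ≤ ∑ i ∈ Finset.Ico 1 n, w i * K i * y i := by
    have hfactor : ∑ i ∈ Finset.Ico 1 n, w i * (L * (A * ((i : ℝ) * h)) ^ (1 / m))
        = L * A ^ (1 / m) * S := by
      rw [Finset.mul_sum]
      refine Finset.sum_congr rfl fun i _ => ?_
      rw [mul_rpow hA.le (by positivity)]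
      ring
    rw [← hfactor]
    exact mul_sum_le_sum_mul_mul hC.le (fun i hi => (hw i hi).le) hK
      (fun i _ => by positivity) hy
  have hz_pow : ((A * X) ^ (1 / m)) ^ (m + 1) = A ^ (1 / m) * A * X ^ (1 + 1 / m) := by
    rw [← rpow_mul (by positivity), show 1 / m * (m + 1) = 1 + 1 / m by field_simp,
      mul_rpow hA.le hX, add_comm 1, rpow_add_one hA.ne']
  refine mul_le_of_sq_mul_rpow_le hL0 hL1 (by positivity) hyn (by linarith : (2 : ℝ) ≤ m + 1) ?_
  calc L ^ 2 * ((A * X) ^ (1 / m)) ^ (m + 1)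
      = C * L * A ^ (1 / m) * (L * (m / (m + 1) * X ^ (1 + 1 / m))) := by
        rw [hz_pow, hA_def]; ring
    _ ≤ C * L * A ^ (1 / m) * (h * S) :=
        mul_le_mul_of_nonneg_left hquad_rel (by positivity)
    _ = h * (C * (L * A ^ (1 / m) * S)) := by ring
    _ ≤ y n ^ (m + 1) := hscheme ▸ mul_le_mul_of_nonneg_left hsum hh.le

/-- lower bound for the iterates of the explicit scheme
(discrete comparison with the power function `t ^ (1/m)`). -/
theorem stmt5
    (m h C ε : ℝ) (hm : 1 ≤ m) (hh : 0 < h) (hC : 0 < C) (hε : 0 ≤ ε)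
    (hsmall : (m + 1) / m * ε * h ^ (-(m + 1) / m) ≤ 1)
    (N : ℕ)
    (w : ℕ → ℕ → ℝ)
    (hw : ∀ n i : ℕ, 1 ≤ i → i < n → n ≤ N → 0 < w n i)
    (K : ℕ → ℕ → ℝ)
    (hK : ∀ n i : ℕ, 1 ≤ i → i < n → n ≤ N → C ≤ K n i)
    (εn : ℕ → ℝ)
    (hquad : ∀ n : ℕ, 2 ≤ n → n ≤ N →
      (∫ t in (0 : ℝ)..((n : ℝ) * h), t ^ (1 / m)) - εn n
        ≤ h * ∑ i ∈ Finset.Ico 1 n, w n i * ((i : ℝ) * h) ^ (1 / m))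
    (hεn : ∀ n : ℕ, 2 ≤ n → n ≤ N → εn n ≤ ε)
    (y : ℕ → ℝ)
    (hynn : ∀ n : ℕ, 0 ≤ y n)
    (hscheme : ∀ n : ℕ, 2 ≤ n → n ≤ N →
      y n ^ (m + 1) = h * ∑ i ∈ Finset.Ico 1 n, w n i * K n i * y i)
    (hy1 : (1 - (m + 1) / m * ε * h ^ (-(1 + 1 / m))) * (C * (m / (m + 1)) * h) ^ (1 / m)
      ≤ y 1) :
    ∀ n : ℕ, 2 ≤ n → n ≤ N →
      (1 - (m + 1) / m * ε * h ^ (-(1 + 1 / m)))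
        * (C * (m / (m + 1)) * ((n : ℝ) * h)) ^ (1 / m) ≤ y n := by
  have hm0 : 0 < m := one_pos.trans_le hm
  set L := 1 - (m + 1) / m * ε * h ^ (-(1 + 1 / m))
  have hL0 : 0 ≤ L := by
    rw [show -(m + 1) / m = -(1 + 1 / m) by field_simp] at hsmall
    linarith
  have hL1 : L ≤ 1 := sub_le_self _ (by positivity)
  suffices ∀ n : ℕ, 1 ≤ n → n ≤ N → L * (C * (m / (m + 1)) * ((n : ℝ) * h)) ^ (1 / m) ≤ y n from
    fun n hn hN => this n (one_le_two.trans hn) hN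
  intro n
  induction n using Nat.strong_induction_on with
  | _ n ih =>
    intro hn hN
    rcases hn.eq_or_lt with rfl | hn2
    · simpa using hy1
    refine lower_bound_step hm hh hC hL0 hL1
      (fun i hi => hw n i (Finset.mem_Ico.mp hi).1 (Finset.mem_Ico.mp hi).2 hN)
      (fun i hi => hK n i (Finset.mem_Ico.mp hi).1 (Finset.mem_Ico.mp hi).2 hN)
      (fun i hi => ih i (Finset.mem_Ico.mp hi).2 (Finset.mem_Ico.mp hi).1
        ((Finset.mem_Ico.mp hi).2.le.trans hN))
      (hynn n) ((sub_le_sub_left (hεn n hn2 hN) _).trans (hquad n hn2 hN)) ?_ (hscheme n hn2 hN)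
    rw [sub_sub_cancel]
    exact le_scaled_error_mul_rpow_of_one_le hm0 hh hε (by exact_mod_cast hn)
end

section
/- Let A ≥ 1, B ≥ 0, and let (e_n)_{n≥1} be a sequence of positive real numbers satisfying e_n ≤ (1/n) · (A · ∑_{i=1}^{n-1} e_i + B) for all n ≥ 2. Set M := max{e_1, B}. Then e_n ≤ M / n^{1−A} (equivalently e_n ≤ M · n^{A−1}) for all n ≥ 1. -/
open Real Finset

/-!
Compare `e` with the majorant `n ↦ M n^(A-1)`. Convexity of `x ↦ x^A` (Bernoulli's inequality) gives
`A i^(A-1) ≤ (i+1)^A - i^A`, so `A ∑_{i<n} M i^(A-1)` telescopes to at most `M (n^A - 1)`; adding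
`B ≤ M` and dividing by `n` returns exactly `M n^(A-1)`, which closes a strong induction on `n`.
-/

lemma mul_rpow_sub_one_le_add_one_rpow_sub_rpow {x A : ℝ} (hx : 0 < x) (hA : 1 ≤ A) :
    A * x ^ (A - 1) ≤ (x + 1) ^ A - x ^ A := by
  have bernoulli : 1 + A * x⁻¹ ≤ (1 + x⁻¹) ^ A :=
    one_add_mul_self_le_rpow_one_add (by linarith [inv_pos.mpr hx]) hA
  have hfactor : (x + 1) ^ A = x ^ A * (1 + x⁻¹) ^ A := by
    rw [← mul_rpow hx.le (by positivity), mul_add, mul_inv_cancel₀ hx.ne', mul_one]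
  have hexpand : x ^ A * (1 + A * x⁻¹) = x ^ A + A * x ^ (A - 1) := by
    rw [rpow_sub_one hx.ne']
    ring
  rw [hfactor]
  nlinarith [mul_le_mul_of_nonneg_left bernoulli (rpow_nonneg hx.le A)]

lemma mul_sum_Ico_rpow_sub_one_le {A : ℝ} (hA : 1 ≤ A) {n : ℕ} (hn : 1 ≤ n) :
    A * ∑ i ∈ Ico 1 n, (i : ℝ) ^ (A - 1) ≤ (n : ℝ) ^ A - 1 := by
  calc A * ∑ i ∈ Ico 1 n, (i : ℝ) ^ (A - 1)
      ≤ ∑ i ∈ Ico 1 n, (((i + 1 : ℕ) : ℝ) ^ A - (i : ℝ) ^ A) := by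
        rw [mul_sum]
        refine sum_le_sum fun i hi ↦ ?_
        have hi : (0 : ℝ) < i := by exact_mod_cast (mem_Ico.mp hi).1
        exact_mod_cast mul_rpow_sub_one_le_add_one_rpow_sub_rpow hi hA
    _ = (n : ℝ) ^ A - 1 := by
        rw [sum_Ico_sub (fun i : ℕ ↦ (i : ℝ) ^ A) hn, Nat.cast_one, one_rpow]

theorem le_mul_rpow_sub_one_of_le_inv_mul_sum {A B M : ℝ} {e : ℕ → ℝ} (hA : 1 ≤ A)
    (hM : 0 ≤ M) (hBM : B ≤ M) (he₁ : e 1 ≤ M)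
    (hrec : ∀ n : ℕ, 2 ≤ n → e n ≤ (1 / (n : ℝ)) * (A * ∑ i ∈ Ico 1 n, e i + B)) :
    ∀ n : ℕ, 1 ≤ n → e n ≤ M * (n : ℝ) ^ (A - 1) := by
  intro n hn
  induction n using Nat.strong_induction_on with
  | _ n ih =>
    obtain rfl | hn₂ := hn.eq_or_lt
    · simpa using he₁
    have hn₀ : (0 : ℝ) < n := by exact_mod_cast hn
    have hsum : A * ∑ i ∈ Ico 1 n, e i ≤ M * (A * ∑ i ∈ Ico 1 n, (i : ℝ) ^ (A - 1)) := by
      rw [mul_sum, mul_sum, mul_sum]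
      refine sum_le_sum fun i hi ↦ ?_
      obtain ⟨hi₁, hin⟩ := mem_Ico.mp hi
      have := mul_le_mul_of_nonneg_left (ih i hin hi₁) (by linarith : 0 ≤ A)
      linarith
    calc e n ≤ (1 / (n : ℝ)) * (A * ∑ i ∈ Ico 1 n, e i + B) := hrec n hn₂
      _ ≤ (1 / (n : ℝ)) * (M * ((n : ℝ) ^ A - 1) + M) := by
          refine mul_le_mul_of_nonneg_left ?_ (by positivity)
          linarith [mul_le_mul_of_nonneg_left (mul_sum_Ico_rpow_sub_one_le hA hn) hM]
      _ = M * (n : ℝ) ^ (A - 1) := by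
          rw [rpow_sub_one hn₀.ne']
          ring

theorem stmt6_general
    (A B : ℝ) (hA : 1 ≤ A) (hB : 0 ≤ B)
    (e : ℕ → ℝ)
    (hrec : ∀ n : ℕ, 2 ≤ n →
      e n ≤ (1 / (n : ℝ)) * (A * ∑ i ∈ Finset.Ico 1 n, e i + B)) :
    ∀ n : ℕ, 1 ≤ n → e n ≤ max (e 1) B / (n : ℝ) ^ (1 - A) := by
  intro n hn
  have hM : 0 ≤ max (e 1) B := hB.trans (le_max_right _ _)
  rw [div_eq_mul_inv, ← rpow_neg (Nat.cast_nonneg n), neg_sub]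
  exact le_mul_rpow_sub_one_of_le_inv_mul_sum hA hM (le_max_right _ _) (le_max_left _ _) hrec n hn

/-- discrete Gronwall–Bellman lemma, case `A ≥ 1`. -/
theorem stmt6
    (A B : ℝ) (hA : 1 ≤ A) (hB : 0 ≤ B)
    (e : ℕ → ℝ)
    (hpos : ∀ n : ℕ, 1 ≤ n → 0 < e n)
    (hrec : ∀ n : ℕ, 2 ≤ n →
      e n ≤ (1 / (n : ℝ)) * (A * ∑ i ∈ Finset.Ico 1 n, e i + B)) :
    ∀ n : ℕ, 1 ≤ n → e n ≤ max (e 1) B / (n : ℝ) ^ (1 - A) :=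
  stmt6_general A B hA hB e hrec
end

section
/- Let 0 < A < 1, B ≥ 0, and let (e_n)_{n≥1} be a sequence of positive real numbers satisfying e_n ≤ (1/n) · (A · ∑_{i=1}^{n-1} e_i + B) for all n ≥ 2. Set M := max{e_1, B} / (−A·ζ(1−A)), where ζ denotes the Riemann zeta function (whose value ζ(1−A) at the real point 1−A ∈ (0,1) is real and negative). Then e_n ≤ M / n^{1−A} for all n ≥ 1. -/
/-!
Put `t_a := A a^(A-1) - (a+1)^A + a^A`, which is nonnegative by concavity of `x ↦ x^A`, and
`T := ∑_{n ≥ 1} t_n`. Telescoping gives `A ∑_{1 ≤ j < n} j^(A-1) ≤ n^A - 1 + T`, and then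
`e_n ≤ M n^(A-1)` with `M = max(e_1, B) / (1 - T)` follows by strong induction, because
`M (n^A - 1 + T) + M (1 - T) = M n^A`. Since also `t_a ≤ A (a^(A-1) - (a+1)^(A-1))`,
we have `T ≤ A < 1`.

To identify `1 - T` with `-A ζ(1-A)`, note that `t_a` is the value at `s = 1 - A` of
`(1-s) a^(-s) - (a+1)^(1-s) + a^(1-s)`. Summed over `a = 1, 2, …` this telescopes to
`(1-s) ζ(s) + 1` when `Re s > 1`, and the terms are `O(a^(-Re s - 1))` locally uniformly on
`Re s > 0`, so by the identity theorem the series still equals `(1-s) ζ(s) + 1` there.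
-/

open Real Finset Filter Topology

/-- `(1 - s) (a^(-s) - ∫ x in a..a+1, x^(-s))` -/
noncomputable def zetaCorrection (s : ℂ) (a : ℝ) : ℂ :=
  (1 - s) * (a : ℂ) ^ (-s) - ((a + 1 : ℝ) : ℂ) ^ (1 - s) + (a : ℂ) ^ (1 - s)

lemma hasDerivAt_ofReal_cpow_const_of_pos {x : ℝ} (hx : 0 < x) (r : ℂ) :
    HasDerivAt (fun t : ℝ => (t : ℂ) ^ r) (r * (x : ℂ) ^ (r - 1)) x := by
  simpa using
    ((hasDerivAt_id (x : ℂ)).cpow_const (Complex.ofReal_mem_slitPlane.2 hx)).comp_ofReal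

lemma norm_ofReal_cpow_neg_sub_le {s : ℂ} (hs : -1 ≤ s.re) {a t : ℝ} (ha : 0 < a)
    (hat : a ≤ t) :
    ‖(t : ℂ) ^ (-s) - (a : ℂ) ^ (-s)‖ ≤ ‖s‖ * a ^ (-s.re - 1) * (t - a) := by
  have hderiv : ∀ x ∈ Set.Icc a t, HasDerivWithinAt (fun x : ℝ => (x : ℂ) ^ (-s))
      (-s * (x : ℂ) ^ (-s - 1)) (Set.Icc a t) x :=
    fun x hx => (hasDerivAt_ofReal_cpow_const_of_pos (ha.trans_le hx.1) _).hasDerivWithinAt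
  have hbound :
      ∀ x ∈ Set.Icc a t, ‖-s * (x : ℂ) ^ (-s - 1)‖ ≤ ‖s‖ * a ^ (-s.re - 1) := by
    intro x hx
    rw [norm_mul, norm_neg, Complex.norm_cpow_eq_rpow_re_of_pos (ha.trans_le hx.1)]
    gcongr
    exact rpow_le_rpow_of_nonpos ha hx.1 (by simp; linarith)
  simpa [Real.norm_of_nonneg (sub_nonneg.2 hat)] using
    (convex_Icc a t).norm_image_sub_le_of_norm_hasDerivWithin_le hderiv hbound
      (Set.left_mem_Icc.2 hat) (Set.right_mem_Icc.2 hat)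

lemma norm_zetaCorrection_le {s : ℂ} (hs : -1 ≤ s.re) {a : ℝ} (ha : 0 < a) :
    ‖zetaCorrection s a‖ ≤ ‖1 - s‖ * ‖s‖ * a ^ (-s.re - 1) := by
  set g : ℝ → ℂ := fun t => (t : ℂ) ^ (1 - s) - (1 - s) * (a : ℂ) ^ (-s) * t
  have hderiv : ∀ t ∈ Set.Icc a (a + 1), HasDerivWithinAt g
      ((1 - s) * ((t : ℂ) ^ (-s) - (a : ℂ) ^ (-s))) (Set.Icc a (a + 1)) t := by
    intro t ht
    have hpow := hasDerivAt_ofReal_cpow_const_of_pos (ha.trans_le ht.1) (1 - s)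
    rw [sub_sub_cancel_left] at hpow
    have hlin := ((hasDerivAt_id t).ofReal_comp).const_mul ((1 - s) * (a : ℂ) ^ (-s))
    exact ((hpow.fun_sub hlin).congr_deriv (by push_cast; ring)).hasDerivWithinAt
  have hbound : ∀ t ∈ Set.Icc a (a + 1),
      ‖(1 - s) * ((t : ℂ) ^ (-s) - (a : ℂ) ^ (-s))‖ ≤
        ‖1 - s‖ * (‖s‖ * a ^ (-s.re - 1)) := by
    intro t ht
    rw [norm_mul]
    gcongr
    calc _ ≤ ‖s‖ * a ^ (-s.re - 1) * (t - a) := norm_ofReal_cpow_neg_sub_le hs ha ht.1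
      _ ≤ ‖s‖ * a ^ (-s.re - 1) * 1 := by gcongr; linarith [ht.2]
      _ = _ := mul_one _
  have hg : zetaCorrection s a = -(g (a + 1) - g a) := by
    simp only [zetaCorrection, g]; push_cast; ring
  rw [hg, norm_neg, mul_assoc]
  simpa using
    (convex_Icc a (a + 1)).norm_image_sub_le_of_norm_hasDerivWithin_le hderiv hbound
      (Set.left_mem_Icc.2 (by linarith)) (Set.right_mem_Icc.2 (by linarith))

lemma differentiable_zetaCorrection {a : ℝ} (ha : 0 < a) :
    Differentiable ℂ (fun s => zetaCorrection s a) := by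
  have ha' : (a : ℂ) ≠ 0 := by exact_mod_cast ha.ne'
  have ha1 : ((a + 1 : ℝ) : ℂ) ≠ 0 := by exact_mod_cast (by linarith : a + 1 ≠ 0)
  unfold zetaCorrection
  fun_prop (disch := exact .inl (by assumption))

lemma summable_nat_add_one_rpow {p : ℝ} (hp : p < -1) :
    Summable (fun n : ℕ => ((n : ℝ) + 1) ^ p) := by
  exact_mod_cast (summable_nat_add_iff 1).2 (Real.summable_nat_rpow.2 hp)

lemma summable_zetaCorrection {s : ℂ} (hs : 0 < s.re) :
    Summable (fun n : ℕ => zetaCorrection s (n + 1)) :=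
  .of_norm_bounded ((summable_nat_add_one_rpow (p := -s.re - 1) (by linarith)).mul_left _)
    fun n => norm_zetaCorrection_le (by linarith) (by positivity)

lemma sum_range_zetaCorrection (s : ℂ) (N : ℕ) :
    ∑ k ∈ range N, zetaCorrection s (k + 1) =
      (1 - s) * ∑ k ∈ range N, ((k + 1 : ℝ) : ℂ) ^ (-s) + 1
        - ((N + 1 : ℝ) : ℂ) ^ (1 - s) := by
  induction N with
  | zero => simp
  | succ N ih =>
    rw [sum_range_succ, ih, sum_range_succ, zetaCorrection]
    push_cast
    ring

lemma hasSum_zetaCorrection_of_one_lt_re {s : ℂ} (hs : 1 < s.re) :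
    HasSum (fun n : ℕ => zetaCorrection s (n + 1)) ((1 - s) * riemannZeta s + 1) := by
  rw [(summable_zetaCorrection (by linarith)).hasSum_iff_tendsto_nat]
  simp_rw [sum_range_zetaCorrection]
  have hzeta : Tendsto (fun N => ∑ k ∈ range N, ((k + 1 : ℝ) : ℂ) ^ (-s)) atTop
      (𝓝 (riemannZeta s)) := by
    have hsum : Summable (fun n : ℕ => 1 / ((n : ℂ) + 1) ^ s) := by
      exact_mod_cast (summable_nat_add_iff 1).2 (Complex.summable_one_div_nat_cpow.2 hs)
    rw [zeta_eq_tsum_one_div_nat_add_one_cpow hs]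
    convert hsum.hasSum.tendsto_sum_nat using 3 with N k
    push_cast
    rw [Complex.cpow_neg, one_div]
  have hpow : Tendsto (fun N : ℕ => ((N + 1 : ℝ) : ℂ) ^ (1 - s)) atTop (𝓝 0) := by
    rw [tendsto_zero_iff_norm_tendsto_zero]
    have hbase : Tendsto (fun N : ℕ => (N : ℝ) + 1) atTop atTop :=
      tendsto_atTop_add_const_right _ 1 tendsto_natCast_atTop_atTop
    refine ((tendsto_rpow_neg_atTop (y := s.re - 1) (by linarith)).comp hbase).congr fun N => ?_
    rw [Complex.norm_cpow_eq_rpow_re_of_pos (by positivity)]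
    simp
  simpa using ((hzeta.const_mul (1 - s)).add_const 1).sub hpow

lemma differentiableOn_tsum_zetaCorrection {δ : ℝ} (hδ : 0 < δ) (R : ℝ) :
    DifferentiableOn ℂ (fun s => ∑' n : ℕ, zetaCorrection s (n + 1))
      ({s | δ < s.re} ∩ Metric.ball 0 R) := by
  refine Complex.differentiableOn_tsum_of_summable_norm
    ((summable_nat_add_one_rpow (p := -δ - 1) (by linarith)).mul_left ((1 + R) * R))
    (fun n => (differentiable_zetaCorrection (by positivity)).differentiableOn)
    ((isOpen_lt continuous_const Complex.continuous_re).inter Metric.isOpen_ball) ?_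
  rintro n s ⟨hsδ : δ < s.re, hsR⟩
  rw [mem_ball_zero_iff] at hsR
  have hR : 0 < R := (norm_nonneg s).trans_lt hsR
  have h1s : ‖1 - s‖ ≤ 1 + R := (norm_sub_le _ _).trans (by simp [hsR.le])
  calc ‖zetaCorrection s (n + 1)‖ ≤ ‖1 - s‖ * ‖s‖ * ((n : ℝ) + 1) ^ (-s.re - 1) :=
        norm_zetaCorrection_le (by linarith) (by positivity)
    _ ≤ (1 + R) * R * ((n : ℝ) + 1) ^ (-δ - 1) := by
        have hpow : ((n : ℝ) + 1) ^ (-s.re - 1) ≤ ((n : ℝ) + 1) ^ (-δ - 1) :=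
          rpow_le_rpow_of_exponent_le (le_add_of_nonneg_left n.cast_nonneg) (by linarith)
        gcongr

theorem hasSum_zetaCorrection {s : ℂ} (hs : 0 < s.re) (hs1 : s ≠ 1) :
    HasSum (fun n : ℕ => zetaCorrection s (n + 1)) ((1 - s) * riemannZeta s + 1) := by
  set U := {w : ℂ | s.re / 2 < w.re} ∩ Metric.ball 0 (‖s‖ + 3)
  have hU : IsOpen U := (isOpen_lt continuous_const Complex.continuous_re).inter Metric.isOpen_ball
  have hsU : s ∈ U := ⟨show s.re / 2 < s.re by linarith, by simp⟩
  have hs2U : s + 2 ∈ U := ⟨show s.re / 2 < (s + 2).re by simp; linarith,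
    by simpa using (norm_add_le s 2).trans_lt (by norm_num)⟩
  -- `(1 - w) ζ(w) + 1` extends to the entire function `1 - riemannZeta₁ w`.
  have heq : Set.EqOn (fun w => ∑' n : ℕ, zetaCorrection w (n + 1))
      (fun w => 1 - riemannZeta₁ w) U := by
    have hζ₁ : Differentiable ℂ fun w => 1 - riemannZeta₁ w := by fun_prop
    refine AnalyticOnNhd.eqOn_of_preconnected_of_eventuallyEq
      ((differentiableOn_tsum_zetaCorrection (by linarith) _).analyticOnNhd hU)
      (hζ₁.differentiableOn.analyticOnNhd hU)
      ((convex_halfSpace_re_gt _).inter (convex_ball _ _)).isPreconnected hs2U ?_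
    filter_upwards [(isOpen_lt continuous_const Complex.continuous_re).mem_nhds
      (show 1 < (s + 2).re by simp; linarith)] with w hw
    have hw1 : w ≠ 1 := by rintro rfl; simp at hw
    rw [(hasSum_zetaCorrection_of_one_lt_re hw).tsum_eq, riemannZeta_eq_inv_sub_mul hw1]
    field_simp [sub_ne_zero.2 hw1]
    ring
  convert (summable_zetaCorrection hs).hasSum using 1
  have hsum : ∑' n : ℕ, zetaCorrection s (n + 1) = 1 - riemannZeta₁ s := heq hsU
  rw [hsum, riemannZeta_eq_inv_sub_mul hs1]
  field_simp [sub_ne_zero.2 hs1]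
  ring

noncomputable def rpowCorrection (A a : ℝ) : ℝ :=
  A * a ^ (A - 1) - (a + 1) ^ A + a ^ A

lemma zetaCorrection_one_sub_ofReal (A : ℝ) {a : ℝ} (ha : 0 ≤ a) :
    zetaCorrection (1 - A) a = rpowCorrection A a := by
  have hneg : -(1 - (A : ℂ)) = ((A - 1 : ℝ) : ℂ) := by push_cast; ring
  rw [zetaCorrection, rpowCorrection, hneg, sub_sub_cancel, ← Complex.ofReal_cpow ha,
    ← Complex.ofReal_cpow ha, ← Complex.ofReal_cpow (by linarith)]
  push_cast
  ring

theorem hasSum_rpowCorrection {A : ℝ} (hA0 : A ≠ 0) (hA1 : A < 1) :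
    HasSum (fun n : ℕ => rpowCorrection A (n + 1)) (A * (riemannZeta (1 - A)).re + 1) := by
  have h := Complex.hasSum_re (hasSum_zetaCorrection (s := 1 - A) (by simpa) (by simpa))
  have hterm (n : ℕ) : zetaCorrection (1 - A) (n + 1) = rpowCorrection A (n + 1) :=
    zetaCorrection_one_sub_ofReal A (by positivity)
  simp_rw [hterm] at h
  simpa using h

lemma rpow_add_one_sub_rpow_mem_Icc {A a : ℝ} (hA0 : 0 ≤ A) (hA1 : A ≤ 1) (ha : 0 < a) :
    (a + 1) ^ A - a ^ A ∈ Set.Icc (A * (a + 1) ^ (A - 1)) (A * a ^ (A - 1)) := by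
  obtain ⟨c, hc, hslope⟩ := exists_hasDerivAt_eq_slope (fun t => t ^ A)
    (fun t => A * t ^ (A - 1)) (lt_add_one a) (continuous_rpow_const hA0).continuousOn
    fun t ht => hasDerivAt_rpow_const (.inl (ha.trans ht.1).ne')
  rw [add_sub_cancel_left, div_one] at hslope
  rw [← hslope]
  have hA1' : A - 1 ≤ 0 := by linarith
  exact ⟨mul_le_mul_of_nonneg_left (rpow_le_rpow_of_nonpos (ha.trans hc.1) hc.2.le hA1') hA0,
    mul_le_mul_of_nonneg_left (rpow_le_rpow_of_nonpos ha hc.1.le hA1') hA0⟩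

lemma rpowCorrection_nonneg {A a : ℝ} (hA0 : 0 ≤ A) (hA1 : A ≤ 1) (ha : 0 < a) :
    0 ≤ rpowCorrection A a := by
  have := (rpow_add_one_sub_rpow_mem_Icc hA0 hA1 ha).2
  rw [rpowCorrection]
  linarith

lemma rpowCorrection_le {A a : ℝ} (hA0 : 0 ≤ A) (hA1 : A ≤ 1) (ha : 0 < a) :
    rpowCorrection A a ≤ A * (a ^ (A - 1) - (a + 1) ^ (A - 1)) := by
  have := (rpow_add_one_sub_rpow_mem_Icc hA0 hA1 ha).1
  rw [rpowCorrection]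
  linarith

lemma sum_range_rpowCorrection (A : ℝ) (N : ℕ) :
    ∑ k ∈ range N, rpowCorrection A (k + 1) =
      A * ∑ j ∈ Ico 1 (N + 1), (j : ℝ) ^ (A - 1) + 1 - ((N : ℝ) + 1) ^ A := by
  induction N with
  | zero => simp
  | succ N ih =>
    rw [sum_range_succ, ih, sum_Ico_succ_top (by omega : 1 ≤ N + 1), rpowCorrection]
    push_cast
    ring

lemma le_of_hasSum_rpowCorrection {A T : ℝ} (hA0 : 0 ≤ A) (hA1 : A ≤ 1)
    (hT : HasSum (fun n : ℕ => rpowCorrection A (n + 1)) T) : T ≤ A := by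
  refine le_of_tendsto' hT.tendsto_sum_nat fun N => ?_
  calc ∑ k ∈ range N, rpowCorrection A (k + 1)
      ≤ ∑ k ∈ range N, A * (((k : ℝ) + 1) ^ (A - 1) - ((k : ℝ) + 1 + 1) ^ (A - 1)) :=
        sum_le_sum fun k _ => rpowCorrection_le hA0 hA1 (by positivity)
    _ = A * (1 - ((N : ℝ) + 1) ^ (A - 1)) := by
        have htel := sum_range_sub' (fun k : ℕ => ((k : ℝ) + 1) ^ (A - 1)) N
        push_cast at htel
        rw [← mul_sum, htel]
        simp
    _ ≤ A := mul_le_of_le_one_right hA0 (sub_le_self _ (by positivity))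

lemma mul_sum_Ico_rpow_le_of_hasSum {A T : ℝ} (hA0 : 0 ≤ A) (hA1 : A ≤ 1)
    (hT : HasSum (fun n : ℕ => rpowCorrection A (n + 1)) T) {n : ℕ} (hn : 1 ≤ n) :
    A * ∑ j ∈ Ico 1 n, (j : ℝ) ^ (A - 1) ≤ n ^ A - 1 + T := by
  obtain ⟨m, rfl⟩ := Nat.exists_eq_add_of_le' hn
  have hpartial := sum_le_hasSum (range m)
    (fun k _ => rpowCorrection_nonneg hA0 hA1 (by positivity)) hT
  rw [sum_range_rpowCorrection] at hpartial
  push_cast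
  linarith

theorem le_mul_rpow_of_le_inv_mul_sum {A B T : ℝ} {e : ℕ → ℝ} (hA : 0 ≤ A) (hT : T < 1)
    (hB : 0 ≤ B)
    (hsum : ∀ n : ℕ, 1 ≤ n → A * ∑ j ∈ Ico 1 n, (j : ℝ) ^ (A - 1) ≤ n ^ A - 1 + T)
    (hrec : ∀ n : ℕ, 2 ≤ n → e n ≤ (1 / (n : ℝ)) * (A * ∑ i ∈ Ico 1 n, e i + B)) :
    ∀ n : ℕ, 1 ≤ n → e n ≤ max (e 1) B / (1 - T) * (n : ℝ) ^ (A - 1) := by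
  set M := max (e 1) B / (1 - T)
  have hT0 : 0 ≤ T := by simpa using hsum 1 le_rfl
  have hmax : 0 ≤ max (e 1) B := le_max_of_le_right hB
  have hM : 0 ≤ M := div_nonneg hmax (by linarith)
  have hMT : M * (1 - T) = max (e 1) B := div_mul_cancel₀ _ (by linarith)
  intro n
  induction n using Nat.strong_induction_on with
  | _ n ih =>
    intro hn
    rcases hn.eq_or_lt with rfl | hn2
    · simpa using (le_max_left _ _).trans (le_div_self hmax (by linarith) (by linarith))
    have hn0 : (0 : ℝ) < n := by positivity
    have hsum_e : ∑ i ∈ Ico 1 n, e i ≤ M * ∑ j ∈ Ico 1 n, (j : ℝ) ^ (A - 1) := by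
      rw [mul_sum]
      exact sum_le_sum fun i hi => ih i (mem_Ico.1 hi).2 (mem_Ico.1 hi).1
    have hstep : A * ∑ i ∈ Ico 1 n, e i + B ≤ M * (n ^ A - 1 + T) + M * (1 - T) := by
      have hAe := mul_le_mul_of_nonneg_left hsum_e hA
      have hMsum := mul_le_mul_of_nonneg_left (hsum n hn) hM
      have hBM : B ≤ M * (1 - T) := hMT ▸ le_max_right _ _
      linarith
    calc e n ≤ (1 / (n : ℝ)) * (A * ∑ i ∈ Ico 1 n, e i + B) := hrec n hn2
      _ ≤ (1 / (n : ℝ)) * (M * (n ^ A - 1 + T) + M * (1 - T)) :=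
          mul_le_mul_of_nonneg_left hstep (by positivity)
      _ = M * (n : ℝ) ^ (A - 1) := by
          rw [rpow_sub hn0, rpow_one]
          field_simp
          ring

theorem stmt7_general
    (A B : ℝ) (hA0 : 0 < A) (hA1 : A < 1) (hB : 0 ≤ B)
    (e : ℕ → ℝ)
    (hrec : ∀ n : ℕ, 2 ≤ n →
      e n ≤ (1 / (n : ℝ)) * (A * ∑ i ∈ Finset.Ico 1 n, e i + B)) :
    ∀ n : ℕ, 1 ≤ n →
      e n ≤ (max (e 1) B / (-(A * (riemannZeta (1 - (A : ℂ))).re))) / (n : ℝ) ^ (1 - A) := by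
  have hT := hasSum_rpowCorrection hA0.ne' hA1
  have hTA := le_of_hasSum_rpowCorrection hA0.le hA1.le hT
  have hbound := le_mul_rpow_of_le_inv_mul_sum hA0.le (hTA.trans_lt hA1) hB
    (fun n hn => mul_sum_Ico_rpow_le_of_hasSum hA0.le hA1.le hT hn) hrec
  intro n hn
  have hconst :
      -(A * (riemannZeta (1 - (A : ℂ))).re) = 1 - (A * (riemannZeta (1 - A)).re + 1) := by
    ring
  rw [hconst, div_eq_mul_inv _ ((n : ℝ) ^ (1 - A)), ← rpow_neg n.cast_nonneg, neg_sub]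
  exact hbound n hn

/-- discrete Gronwall–Bellman lemma, case `0 < A < 1`,
with the constant expressed through the Riemann zeta function at `1 - A`. -/
theorem stmt7
    (A B : ℝ) (hA0 : 0 < A) (hA1 : A < 1) (hB : 0 ≤ B)
    (e : ℕ → ℝ)
    (hpos : ∀ n : ℕ, 1 ≤ n → 0 < e n)
    (hrec : ∀ n : ℕ, 2 ≤ n →
      e n ≤ (1 / (n : ℝ)) * (A * ∑ i ∈ Finset.Ico 1 n, e i + B)) :
    ∀ n : ℕ, 1 ≤ n →
      e n ≤ (max (e 1) B / (-(A * (riemannZeta (1 - (A : ℂ))).re))) / (n : ℝ) ^ (1 - A) :=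
  stmt7_general A B hA0 hA1 hB e hrec
end

section
/- Let m > 0, X > 0 and define y : [0,X] → ℝ by y(x) = e^{x/(m+1)} · (1 − e^{−(m/(m+1))·x})^{1/m}. Then y satisfies y(x)^{m+1} = ∫_0^x e^{x−t} y(t) dt for every x ∈ [0,X]. -/
open Real Set intervalIntegral

/-! With `c = m / (m + 1)` and `u t = 1 - exp (-c t)`, the integrand is `exp x * exp (-c t) * u t ^ (1/m)`,
and `exp (-c t) * u t ^ (1/m)` is exactly the derivative of `u t ^ ((m + 1) / m)`, so the integral
equals `exp x * u x ^ ((m + 1) / m) = y x ^ (m + 1)`. -/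

theorem hasDerivAt_one_sub_exp_neg_mul_rpow (c p t : ℝ) (hp : 1 ≤ p) :
    HasDerivAt (fun s => (1 - exp (-c * s)) ^ p)
      (p * c * (exp (-c * t) * (1 - exp (-c * t)) ^ (p - 1))) t := by
  have hinner : HasDerivAt (fun s => 1 - exp (-c * s)) (c * exp (-c * t)) t := by
    have := (((hasDerivAt_id t).const_mul (-c)).exp).const_sub 1
    exact this.congr_deriv (by simp only [id, mul_one]; ring)
  exact ((hasDerivAt_rpow_const (Or.inr hp)).comp t hinner).congr_deriv (by ring)

theorem integral_exp_neg_mul_mul_one_sub_exp_neg_mul_rpow (c p x : ℝ) (hc : c ≠ 0) (hp : 1 ≤ p) :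
    ∫ t in (0 : ℝ)..x, exp (-c * t) * (1 - exp (-c * t)) ^ (p - 1) =
      (1 - exp (-c * x)) ^ p / (p * c) := by
  have hpc : p * c ≠ 0 := mul_ne_zero (by linarith) hc
  have hcont : Continuous fun t => exp (-c * t) * (1 - exp (-c * t)) ^ (p - 1) := by
    have : Continuous fun t => exp (-c * t) := by fun_prop
    exact this.mul ((continuous_const.sub this).rpow_const fun _ => Or.inr (by linarith))
  rw [eq_div_iff hpc, mul_comm, ← integral_const_mul,
    integral_eq_sub_of_hasDerivAt (fun t _ => hasDerivAt_one_sub_exp_neg_mul_rpow c p t hp)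
      ((hcont.intervalIntegrable 0 x).const_mul _)]
  simp [zero_rpow (by linarith : p ≠ 0)]

theorem exp_sub_mul_exp_div_succ_mul (m x t a : ℝ) (hm : m + 1 ≠ 0) :
    exp (x - t) * (exp (t / (m + 1)) * a) = exp x * (exp (-(m / (m + 1)) * t) * a) := by
  rw [← mul_assoc, ← mul_assoc, ← exp_add, ← exp_add]
  congr 2
  field_simp
  ring

theorem exp_div_succ_mul_one_sub_exp_rpow_rpow_succ (m x : ℝ) (hm : 0 < m) (hx : 0 ≤ x) :
    (exp (x / (m + 1)) * (1 - exp (-(m / (m + 1)) * x)) ^ (1 / m)) ^ (m + 1) =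
      exp x * (1 - exp (-(m / (m + 1)) * x)) ^ ((m + 1) / m) := by
  have hu : 0 ≤ 1 - exp (-(m / (m + 1)) * x) := by
    have : -(m / (m + 1)) * x ≤ 0 := by
      have : 0 ≤ m / (m + 1) := by positivity
      nlinarith
    linarith [exp_le_one_iff.mpr this]
  rw [mul_rpow (exp_pos _).le (rpow_nonneg hu _), ← exp_mul, ← rpow_mul hu,
    div_mul_cancel₀ _ (by linarith), one_div_mul_eq_div]

theorem stmt11_general
    (m X : ℝ) (hm : 0 < m)
    (y : ℝ → ℝ)
    (hy : ∀ x : ℝ, y x =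
      Real.exp (x / (m + 1)) * (1 - Real.exp (-(m / (m + 1)) * x)) ^ (1 / m)) :
    ∀ x ∈ Set.Icc (0 : ℝ) X,
      y x ^ (m + 1) = ∫ t in (0 : ℝ)..x, Real.exp (x - t) * y t := by
  rintro x ⟨hx, -⟩
  have hm1 : m + 1 ≠ 0 := by linarith
  have hexp : (m + 1) / m - 1 = 1 / m := by field_simp; ring
  have hpc : (m + 1) / m * (m / (m + 1)) = 1 := by field_simp
  have hintegral := integral_exp_neg_mul_mul_one_sub_exp_neg_mul_rpow (m / (m + 1)) ((m + 1) / m) x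
    (by positivity) (by rw [le_div_iff₀ hm]; linarith)
  rw [hexp, hpc, div_one] at hintegral
  simp_rw [hy, exp_sub_mul_exp_div_succ_mul m x _ _ hm1, integral_const_mul, hintegral]
  exact exp_div_succ_mul_one_sub_exp_rpow_rpow_succ m x hm hx

/-- the explicit function solves the Volterra equation with
convolution kernel `K(x,t) = exp (x - t)` on `[0,X]`. -/
theorem stmt11
    (m X : ℝ) (hm : 0 < m) (hX : 0 < X)
    (y : ℝ → ℝ)
    (hy : ∀ x : ℝ, y x =
      Real.exp (x / (m + 1)) * (1 - Real.exp (-(m / (m + 1)) * x)) ^ (1 / m)) :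
    ∀ x ∈ Set.Icc (0 : ℝ) X,
      y x ^ (m + 1) = ∫ t in (0 : ℝ)..x, Real.exp (x - t) * y t :=
  stmt11_general m X hm y hy
end

section
/- Let m > 0, C > 0, X > 0, let K : [0,X]×[0,X] → ℝ be continuous and positive with sup_{0 ≤ t ≤ x} |K(x,t) − C| → 0 as x → 0⁺, and let y : [0,X] → ℝ be continuous, positive on (0,X], and satisfy y(x)^{m+1} = ∫_0^x K(x,t) y(t) dt on [0,X]. Define y_1(h) := (∫_0^h K(h,t) dt)^{1/m} for h ∈ (0,X]. Then y_1(h) − y(h) ∼ (1 − (m/(m+1))^{1/m}) · (C·h)^{1/m} as h → 0⁺; that is, lim_{h→0⁺} (y_1(h) − y(h)) / (C·h)^{1/m} = 1 − (m/(m+1))^{1/m}. -/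
/-! Write `F(x) = ∫₀ˣ y`. Since `K(h, ·)` is uniformly close to `C` on `[0, h]`, the kernel
averages satisfy `y(h)^(m+1) / F(h) → C` and `(∫₀ʰ K(h,t) dt) / h → C`. The first says
`F' ≈ (C F)^(1/(m+1))`, so `(F^(m/(m+1)))' → (m/(m+1)) C^(1/(m+1))`, and L'Hôpital's rule gives
`F(h)^(m/(m+1)) ∼ (m/(m+1)) C^(1/(m+1)) h`. Substituting into `y^(m+1) ∼ C F` yields
`y(h) ∼ (m/(m+1))^(1/m) (C h)^(1/m)`, whereas `y₁(h) ∼ (C h)^(1/m)`. -/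

open Real Set Filter Topology intervalIntegral
open MeasureTheory (volume ae_of_all)

theorem integral_pos_of_continuousOn_of_pos {g : ℝ → ℝ} {a b h : ℝ}
    (hg : ContinuousOn g (Icc a b)) (hgpos : ∀ x ∈ Ioc a b, 0 < g x) (hh : h ∈ Ioc a b) :
    0 < ∫ t in a..h, g t :=
  intervalIntegral_pos_of_pos_on
    ((hg.mono (Icc_subset_Icc le_rfl hh.2)).intervalIntegrable_of_Icc hh.1.le)
    (fun t ht => hgpos t ⟨ht.1, ht.2.le.trans hh.2⟩) hh.1

theorem abs_integral_mul_sub_mul_integral_le {f g : ℝ → ℝ} {a b c ε : ℝ} (hab : a ≤ b)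
    (hfg : IntervalIntegrable (fun t => f t * g t) volume a b)
    (hg : IntervalIntegrable g volume a b) (hg0 : ∀ t ∈ Ioc a b, 0 ≤ g t)
    (hf : ∀ t ∈ Ioc a b, |f t - c| ≤ ε) :
    |(∫ t in a..b, f t * g t) - c * ∫ t in a..b, g t| ≤ ε * ∫ t in a..b, g t := by
  rw [← integral_const_mul, ← integral_sub hfg (hg.const_mul c), ← integral_const_mul,
    ← Real.norm_eq_abs]
  refine norm_integral_le_of_norm_le hab (ae_of_all _ fun t ht => ?_) (hg.const_mul ε)
  rw [Real.norm_eq_abs, ← sub_mul, abs_mul, abs_of_nonneg (hg0 t ht)]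
  exact mul_le_mul_of_nonneg_right (hf t ht) (hg0 t ht)

theorem tendsto_div_of_abs_sub_mul_le {α : Type*} {l : Filter α} {N D : α → ℝ} {c : ℝ}
    (hD : ∀ᶠ x in l, 0 < D x) (h : ∀ ε > 0, ∀ᶠ x in l, |N x - c * D x| ≤ ε * D x) :
    Tendsto (fun x => N x / D x) l (𝓝 c) := by
  refine Metric.tendsto_nhds.2 fun ε hε => ?_
  filter_upwards [hD, h (ε / 2) (half_pos hε)] with x hDx hx
  rw [Real.dist_eq, div_sub' hDx.ne', abs_div, abs_of_pos hDx, div_lt_iff₀ hDx, mul_comm (D x)]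
  nlinarith

theorem tendsto_integral_mul_div_integral {K : ℝ → ℝ → ℝ} {g : ℝ → ℝ} {C X : ℝ} (hX : 0 < X)
    (hKg : ∀ h ∈ Ioc 0 X, IntervalIntegrable (fun t => K h t * g t) volume 0 h)
    (hKC : ∀ ε > 0, ∀ᶠ h in 𝓝[>] 0, ∀ t ∈ Ioc 0 h, |K h t - C| ≤ ε)
    (hg : ContinuousOn g (Icc 0 X)) (hgpos : ∀ x ∈ Ioc 0 X, 0 < g x) :
    Tendsto (fun h => (∫ t in 0..h, K h t * g t) / ∫ t in 0..h, g t) (𝓝[>] 0) (𝓝 C) := by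
  have hX' : ∀ᶠ h in 𝓝[>] (0 : ℝ), h ∈ Ioc 0 X := Ioc_mem_nhdsGT hX
  have hgint : ∀ h ∈ Ioc 0 X, IntervalIntegrable g volume 0 h := fun h hh =>
    (hg.mono (Icc_subset_Icc le_rfl hh.2)).intervalIntegrable_of_Icc hh.1.le
  refine tendsto_div_of_abs_sub_mul_le ?_ fun ε hε => ?_
  · filter_upwards [hX'] with h hh
    exact integral_pos_of_continuousOn_of_pos hg hgpos hh
  · filter_upwards [hX', hKC ε hε] with h hh hK
    exact abs_integral_mul_sub_mul_integral_le hh.1.le (hKg h hh) (hgint h hh)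
      (fun t ht => (hgpos t ⟨ht.1, ht.2.trans hh.2⟩).le) hK

theorem tendsto_rpow_div_mul_rpow {a : ℝ → ℝ} {C r : ℝ} (hC : 0 < C)
    (ha : Tendsto (fun h => a h / h) (𝓝[>] 0) (𝓝 C)) :
    Tendsto (fun h => a h ^ r / (C * h) ^ r) (𝓝[>] 0) (𝓝 1) := by
  have hlim : Tendsto (fun h => (a h / h / C) ^ r) (𝓝[>] 0) (𝓝 ((C / C) ^ r)) :=
    (ha.div_const C).rpow_const (Or.inl (div_ne_zero hC.ne' hC.ne'))
  rw [div_self hC.ne', one_rpow] at hlim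
  refine hlim.congr' ?_
  filter_upwards [ha.eventually_const_lt hC, self_mem_nhdsWithin] with h hah (hh : 0 < h)
  have ha0 : 0 < a h := (div_pos_iff_of_pos_right hh).1 hah
  rw [div_div, mul_comm h C, div_rpow ha0.le (by positivity)]

theorem tendsto_integral_rpow_div {y : ℝ → ℝ} {m C X : ℝ} (hm : 0 < m) (hX : 0 < X)
    (hy : ContinuousOn y (Icc 0 X)) (hypos : ∀ x ∈ Ioc 0 X, 0 < y x)
    (hratio : Tendsto (fun x => y x ^ (m + 1) / ∫ t in 0..x, y t) (𝓝[>] 0) (𝓝 C)) :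
    Tendsto (fun h => (∫ t in 0..h, y t) ^ (m / (m + 1)) / h) (𝓝[>] 0)
      (𝓝 (m / (m + 1) * C ^ (1 / (m + 1)))) := by
  set F : ℝ → ℝ := fun h => ∫ t in 0..h, y t
  set p := m / (m + 1)
  have hm1 : 0 < m + 1 := by linarith
  have hp : 0 < p := by positivity
  have hyint : ∀ x ∈ Icc 0 X, IntervalIntegrable y volume 0 x := fun x hx =>
    (hy.mono (Icc_subset_Icc le_rfl hx.2)).intervalIntegrable_of_Icc hx.1
  have hFpos : ∀ x ∈ Ioc 0 X, 0 < F x := fun x hx =>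
    integral_pos_of_continuousOn_of_pos hy hypos hx
  have hF : ∀ x ∈ Ioo 0 X, HasDerivAt F (y x) x := fun x hx =>
    have hIcc : Icc 0 X ∈ 𝓝 x := Icc_mem_nhds hx.1 hx.2
    integral_hasDerivAt_right (hyint x ⟨hx.1.le, hx.2.le⟩)
      ⟨Icc 0 X, hIcc, hy.aestronglyMeasurable measurableSet_Icc⟩ (hy.continuousAt hIcc)
  have hF0 : Tendsto F (𝓝[>] 0) (𝓝 0) := by
    have hcont : ContinuousOn F (Icc 0 X) := by
      rw [← uIcc_of_le hX.le]
      exact continuousOn_primitive_interval (by rw [uIcc_of_le hX.le]; exact hy.integrableOn_Icc)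
    have := ((hcont 0 ⟨le_rfl, hX.le⟩).mono Ioc_subset_Icc_self).tendsto
    rwa [nhdsWithin_Ioc_eq_nhdsGT hX, show F 0 = 0 from integral_same] at this
  have hderiv : ∀ x ∈ Ioo 0 X,
      y x * p * F x ^ (p - 1) = p * (y x ^ (m + 1) / F x) ^ (1 / (m + 1)) := by
    intro x hx
    have hFx := hFpos x ⟨hx.1, hx.2.le⟩
    have hyx := hypos x ⟨hx.1, hx.2.le⟩
    rw [div_rpow (by positivity) hFx.le, ← rpow_mul hyx.le, mul_one_div_cancel hm1.ne',
      rpow_one, show p - 1 = -(1 / (m + 1)) by simp only [p]; field_simp; ring,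
      rpow_neg hFx.le]
    ring
  refine HasDerivAt.lhopital_zero_right_on_Ioo hX
    (fun x hx => (hF x hx).rpow_const (Or.inl (hFpos x ⟨hx.1, hx.2.le⟩).ne'))
    (fun x _ => hasDerivAt_id' x) (fun _ _ => one_ne_zero) ?_ nhdsWithin_le_nhds ?_
  · simpa [zero_rpow hp.ne'] using hF0.rpow_const (p := p) (Or.inr hp.le)
  · refine ((hratio.rpow_const (Or.inr (by positivity))).const_mul p).congr' ?_
    filter_upwards [Ioo_mem_nhdsGT hX] with x hx
    rw [div_one, hderiv x hx]

theorem tendsto_div_mul_rpow_of_tendsto_rpow_div_integral {y : ℝ → ℝ} {m C X : ℝ}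
    (hm : 0 < m) (hC : 0 < C) (hX : 0 < X) (hy : ContinuousOn y (Icc 0 X)) (hypos : ∀ x ∈ Ioc 0 X, 0 < y x)
    (hratio : Tendsto (fun x => y x ^ (m + 1) / ∫ t in 0..x, y t) (𝓝[>] 0) (𝓝 C)) :
    Tendsto (fun h => y h / (C * h) ^ (1 / m)) (𝓝[>] 0) (𝓝 ((m / (m + 1)) ^ (1 / m))) := by
  set F : ℝ → ℝ := fun h => ∫ t in 0..h, y t
  set p := m / (m + 1)
  have hm1 : 0 < m + 1 := by linarith
  have hp : 0 < p := by positivity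
  have hlim : Tendsto
      (fun h => (y h ^ (m + 1) / F h) ^ (1 / (m + 1)) * (F h ^ p / h) ^ (1 / m) / C ^ (1 / m))
      (𝓝[>] 0) (𝓝 (C ^ (1 / (m + 1)) * (p * C ^ (1 / (m + 1))) ^ (1 / m) / C ^ (1 / m))) :=
    ((hratio.rpow_const (Or.inr (by positivity))).mul
      ((tendsto_integral_rpow_div hm hX hy hypos hratio).rpow_const
        (Or.inr (by positivity)))).div_const _
  have hval :
      C ^ (1 / (m + 1)) * (p * C ^ (1 / (m + 1))) ^ (1 / m) / C ^ (1 / m) = p ^ (1 / m) := by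
    refine log_injOn_pos (by simp only [mem_Ioi]; positivity)
      (by simp only [mem_Ioi]; positivity) ?_
    rw [log_div (by positivity) (by positivity), log_mul (by positivity) (by positivity),
      log_rpow hC, log_rpow (by positivity), log_mul hp.ne' (by positivity), log_rpow hC,
      log_rpow hC, log_rpow hp]
    field_simp
    ring
  rw [hval] at hlim
  refine hlim.congr' ?_
  filter_upwards [Ioc_mem_nhdsGT hX] with h hh
  have hyh := hypos h hh
  have hFh : 0 < F h := integral_pos_of_continuousOn_of_pos hy hypos hh
  rw [div_rpow (by positivity) hFh.le, div_rpow (by positivity) hh.1.le, ← rpow_mul hyh.le,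
    ← rpow_mul hFh.le, mul_one_div_cancel hm1.ne', rpow_one, mul_rpow hC.le hh.1.le,
    show p * (1 / m) = 1 / (m + 1) by simp only [p]; field_simp]
  field_simp

theorem stmt13_general
    (m C X : ℝ) (hm : 0 < m) (hC : 0 < C) (hX : 0 < X)
    (K : ℝ → ℝ → ℝ)
    (hKcont : ContinuousOn (fun p : ℝ × ℝ => K p.1 p.2) (Set.Icc 0 X ×ˢ Set.Icc 0 X))
    (hKasymp : ∀ ε > (0 : ℝ), ∃ δ > (0 : ℝ), ∀ x : ℝ, 0 < x → x < δ → x ≤ X →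
      ∀ t : ℝ, 0 ≤ t → t ≤ x → |K x t - C| < ε)
    (y : ℝ → ℝ)
    (hycont : ContinuousOn y (Set.Icc 0 X))
    (hypos : ∀ x ∈ Set.Ioc (0 : ℝ) X, 0 < y x)
    (hsol : ∀ x ∈ Set.Icc (0 : ℝ) X, y x ^ (m + 1) = ∫ t in (0 : ℝ)..x, K x t * y t) :
    Filter.Tendsto
      (fun h : ℝ => ((∫ t in (0 : ℝ)..h, K h t) ^ (1 / m) - y h) / (C * h) ^ (1 / m))
      (nhdsWithin 0 (Set.Ioi 0))
      (nhds (1 - (m / (m + 1)) ^ (1 / m))) := by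
  have hKC : ∀ ε > 0, ∀ᶠ h in 𝓝[>] (0 : ℝ), ∀ t ∈ Ioc 0 h, |K h t - C| ≤ ε := by
    intro ε hε
    obtain ⟨δ, hδ, hK⟩ := hKasymp ε hε
    filter_upwards [Ioo_mem_nhdsGT (lt_min hδ hX)] with h hh t ht
    exact (hK h hh.1 (hh.2.trans_le (min_le_left _ _)) (hh.2.le.trans (min_le_right _ _))
      t ht.1.le ht.2).le
  have hKint : ∀ g : ℝ → ℝ, ContinuousOn g (Icc 0 X) →
      ∀ h ∈ Ioc 0 X, IntervalIntegrable (fun t => K h t * g t) volume 0 h := by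
    intro g hg h hh
    have hslice : ContinuousOn (K h) (Icc 0 h) :=
      hKcont.comp (continuous_const.prodMk continuous_id).continuousOn
        fun t ht => ⟨⟨hh.1.le, hh.2⟩, ht.1, ht.2.trans hh.2⟩
    exact (hslice.mul (hg.mono (Icc_subset_Icc le_rfl hh.2))).intervalIntegrable_of_Icc hh.1.le
  have hstart : Tendsto (fun h => (∫ t in (0 : ℝ)..h, K h t) ^ (1 / m) / (C * h) ^ (1 / m))
      (𝓝[>] 0) (𝓝 1) := by
    refine tendsto_rpow_div_mul_rpow hC ?_
    simpa using tendsto_integral_mul_div_integral hX (hKint 1 continuousOn_const) hKC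
      continuousOn_const fun _ _ => one_pos
  have hy : Tendsto (fun h => y h / (C * h) ^ (1 / m)) (𝓝[>] 0)
      (𝓝 ((m / (m + 1)) ^ (1 / m))) := by
    refine tendsto_div_mul_rpow_of_tendsto_rpow_div_integral hm hC hX hycont hypos
      ((tendsto_integral_mul_div_integral hX (hKint y hycont) hKC hycont hypos).congr' ?_)
    filter_upwards [Ioc_mem_nhdsGT hX] with h hh
    rw [hsol h ⟨hh.1.le, hh.2⟩]
  simpa only [sub_div] using hstart.sub hy

/-- asymptotics of the starting error of the explicit scheme
when the kernel tends to the constant `C` near the origin, uniformly in `t ≤ x`. -/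
theorem stmt13
    (m C X : ℝ) (hm : 0 < m) (hC : 0 < C) (hX : 0 < X)
    (K : ℝ → ℝ → ℝ)
    (hKcont : ContinuousOn (fun p : ℝ × ℝ => K p.1 p.2) (Set.Icc 0 X ×ˢ Set.Icc 0 X))
    (hKpos : ∀ x ∈ Set.Icc (0 : ℝ) X, ∀ t ∈ Set.Icc (0 : ℝ) X, 0 < K x t)
    (hKasymp : ∀ ε > (0 : ℝ), ∃ δ > (0 : ℝ), ∀ x : ℝ, 0 < x → x < δ → x ≤ X →
      ∀ t : ℝ, 0 ≤ t → t ≤ x → |K x t - C| < ε)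
    (y : ℝ → ℝ)
    (hycont : ContinuousOn y (Set.Icc 0 X))
    (hypos : ∀ x ∈ Set.Ioc (0 : ℝ) X, 0 < y x)
    (hsol : ∀ x ∈ Set.Icc (0 : ℝ) X, y x ^ (m + 1) = ∫ t in (0 : ℝ)..x, K x t * y t) :
    Filter.Tendsto
      (fun h : ℝ => ((∫ t in (0 : ℝ)..h, K h t) ^ (1 / m) - y h) / (C * h) ^ (1 / m))
      (nhdsWithin 0 (Set.Ioi 0))
      (nhds (1 - (m / (m + 1)) ^ (1 / m))) :=
  stmt13_general m C X hm hC hX K hKcont hKasymp y hycont hypos hsol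
end

section
/- For every real A with 0 < A < 1, the value ζ(1−A) of the Riemann zeta function at the real point 1−A ∈ (0,1) is real and satisfies −1 < A·ζ(1−A) < 0. -/
open Real Complex

/-!
Abel summation gives `ζ s = s / (s - 1) - s * ∫₁^∞ {t} t^(-s-1) dt` for `1 < re s`. The
integral is the Mellin transform at `-s` of a bounded function vanishing near `0`, hence
holomorphic on `0 < re s`, and the identity persists there by analytic continuation of the
entire function `(s - 1) ζ s`. For real `0 < σ < 1` the integral `I` satisfies
`0 ≤ I < ∫₁^∞ t^(-σ-1) dt = 1 / σ`, and with `A = 1 - σ` the identity reads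
`A ζ(1 - A) = -σ - A σ I ∈ (-1, 0)`.
-/

open MeasureTheory Set Filter Asymptotics

noncomputable def fractIntegral (s : ℂ) : ℂ :=
  ∫ t : ℝ in Ioi 1, (t : ℂ) ^ (-(s + 1)) * Int.fract t

noncomputable def fractIndicator : ℝ → ℂ :=
  (Ioi 1).indicator fun t ↦ ((Int.fract t : ℝ) : ℂ)

lemma measurable_fractIndicator : Measurable fractIndicator :=
  (measurable_ofReal.comp measurable_fract).indicator measurableSet_Ioi

lemma norm_fractIndicator_le (t : ℝ) : ‖fractIndicator t‖ ≤ 1 := by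
  by_cases ht : t ∈ Ioi 1
  · simp [fractIndicator, indicator_of_mem ht, abs_of_nonneg (Int.fract_nonneg t),
      (Int.fract_lt_one t).le]
  · simp [fractIndicator, indicator_of_notMem ht]

lemma fractIntegral_eq_mellin : fractIntegral = fun s ↦ mellin fractIndicator (-s) := by
  ext s
  have (t : ℝ) : (t : ℂ) ^ (-s - 1) • fractIndicator t
      = (Ioi 1).indicator (fun t : ℝ ↦ (t : ℂ) ^ (-(s + 1)) * Int.fract t) t := by
    rw [fractIndicator, smul_eq_mul, neg_add',
      indicator_mul_right (f := fun t : ℝ ↦ (t : ℂ) ^ (-s - 1))]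
  simp_rw [fractIntegral, mellin, this, setIntegral_indicator measurableSet_Ioi, Ioi_inter_Ioi,
    sup_of_le_right zero_le_one]

lemma differentiableAt_fractIntegral {s : ℂ} (hs : 0 < s.re) :
    DifferentiableAt ℂ fractIntegral s := by
  have hmellin : DifferentiableAt ℂ (mellin fractIndicator) (-s) := by
    refine mellin_differentiableAt_of_isBigO_rpow (a := 0) (b := (-s).re - 1) ?_ ?_ ?_ ?_ ?_
    · exact ((memLp_top_of_bound measurable_fractIndicator.aestronglyMeasurable 1
        (ae_of_all _ norm_fractIndicator_le)).locallyIntegrable le_top).locallyIntegrableOn _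
    · refine IsBigO.of_bound 1 (Eventually.of_forall fun t ↦ ?_)
      simpa using norm_fractIndicator_le t
    · simpa using hs
    · refine (isBigO_zero _ _).congr' ?_ EventuallyEq.rfl
      filter_upwards [nhdsWithin_le_nhds (Iio_mem_nhds zero_lt_one)] with t ht
      exact (indicator_of_notMem (not_lt.mpr ht.le) _).symm
    · linarith
  rw [fractIntegral_eq_mellin]
  exact hmellin.comp s differentiableAt_id.neg

lemma integrableOn_cpow_mul_fract {s : ℂ} (hs : 0 < s.re) :
    IntegrableOn (fun t : ℝ ↦ (t : ℂ) ^ (-(s + 1)) * Int.fract t) (Ioi 1) := by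
  have hpow : IntegrableOn (fun t : ℝ ↦ (t : ℂ) ^ (-(s + 1))) (Ioi 1) :=
    integrableOn_Ioi_cpow_of_lt (by simpa using hs) zero_lt_one
  refine Integrable.mono hpow (hpow.aestronglyMeasurable.mul
    (measurable_ofReal.comp measurable_fract).aestronglyMeasurable) (ae_of_all _ fun t ↦ ?_)
  rw [norm_mul, norm_real, norm_of_nonneg (Int.fract_nonneg t)]
  exact mul_le_of_le_one_right (norm_nonneg _) (Int.fract_lt_one t).le

lemma riemannZeta_eq_div_sub_mul_fractIntegral_of_one_lt_re {s : ℂ} (hs : 1 < s.re) :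
    riemannZeta s = s / (s - 1) - s * fractIntegral s := by
  have hs0 : 0 < s.re := zero_lt_one.trans hs
  have hfloor : ∀ t ∈ Ioi (1 : ℝ),
      (∑ k ∈ Finset.Icc 1 ⌊t⌋₊, (1 : ℕ → ℂ) k) * (t : ℂ) ^ (-(s + 1))
        = (t : ℂ) ^ (-s) - (t : ℂ) ^ (-(s + 1)) * Int.fract t := by
    intro t ht
    have ht0 : (t : ℂ) ≠ 0 := ofReal_ne_zero.mpr (zero_lt_one.trans ht).ne'
    have hpow : (t : ℂ) ^ (-s) = (t : ℂ) ^ (-(s + 1)) * t := by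
      rw [show -s = -(s + 1) + 1 by ring, cpow_add _ _ ht0, cpow_one]
    simp only [Pi.one_apply]
    rw [hpow, Finset.sum_const, Nat.card_Icc, add_tsub_cancel_right, nsmul_eq_mul,
      mul_one, ← ofReal_natCast, natCast_floor_eq_intCast_floor (zero_lt_one.trans ht).le,
      ← Int.self_sub_fract]
    push_cast
    ring
  rw [← LSeries_one_eq_riemannZeta hs, LSeries_eq_mul_integral' 1 zero_le_one (by simpa using hs),
    setIntegral_congr_fun measurableSet_Ioi hfloor,
    integral_sub (integrableOn_Ioi_cpow_of_lt (by simpa using hs) zero_lt_one)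
      (integrableOn_cpow_mul_fract hs0),
    integral_Ioi_cpow_of_lt (by simpa using hs) zero_lt_one, ← fractIntegral]
  · rw [ofReal_one, one_cpow, show -s + 1 = -(s - 1) by ring, div_neg, neg_div, neg_neg]
    ring
  · refine (isBigO_refl (fun n : ℕ ↦ (n : ℝ)) _).congr (fun n ↦ ?_) (fun n ↦ ?_) <;> simp

lemma riemannZeta₁_eq_sub_mul_fractIntegral {s : ℂ} (hs : 0 < s.re) :
    riemannZeta₁ s = s - s * (s - 1) * fractIntegral s := by
  have hU : IsOpen {s : ℂ | 0 < s.re} := isOpen_lt continuous_const continuous_re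
  have hG : AnalyticOnNhd ℂ (fun s ↦ s - s * (s - 1) * fractIntegral s) {s : ℂ | 0 < s.re} :=
    DifferentiableOn.analyticOnNhd (fun s hs ↦
      (differentiableAt_id.sub ((differentiableAt_id.mul (differentiableAt_id.sub_const 1)).mul
        (differentiableAt_fractIntegral hs))).differentiableWithinAt) hU
  have hagree : ∀ z : ℂ, 1 < z.re → riemannZeta₁ z = z - z * (z - 1) * fractIntegral z := by
    intro z hz
    have hz1 : z - 1 ≠ 0 := sub_ne_zero.mpr fun h ↦ by simp [h] at hz
    rw [← mul_inv_cancel_left₀ hz1 (riemannZeta₁ z),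
      ← riemannZeta_eq_inv_sub_mul (sub_ne_zero.mp hz1),
      riemannZeta_eq_div_sub_mul_fractIntegral_of_one_lt_re hz]
    field_simp
  exact (differentiable_riemannZeta₁.differentiableOn.analyticOnNhd hU)
    |>.eqOn_of_preconnected_of_eventuallyEq hG (convex_halfSpace_re_gt 0).isPreconnected
      (by norm_num : (2 : ℂ) ∈ _)
      (eventuallyEq_of_mem ((isOpen_lt continuous_const continuous_re).mem_nhds (by norm_num))
        hagree) hs

lemma riemannZeta_eq_div_sub_mul_fractIntegral {s : ℂ} (hs : 0 < s.re) (hs1 : s ≠ 1) :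
    riemannZeta s = s / (s - 1) - s * fractIntegral s := by
  have hs1' : s - 1 ≠ 0 := sub_ne_zero.mpr hs1
  rw [riemannZeta_eq_inv_sub_mul hs1, riemannZeta₁_eq_sub_mul_fractIntegral hs]
  field_simp

lemma fractIntegral_ofReal (σ : ℝ) :
    fractIntegral σ = ((∫ t in Ioi (1 : ℝ), t ^ (-(σ + 1)) * Int.fract t : ℝ) : ℂ) := by
  rw [fractIntegral, ← integral_complex_ofReal]
  refine setIntegral_congr_fun measurableSet_Ioi fun t ht ↦ ?_
  rw [ofReal_mul, ofReal_cpow (zero_lt_one.trans ht).le]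
  push_cast
  rfl

lemma mul_integral_rpow_mul_fract_lt_one {σ : ℝ} (hσ : 0 < σ) :
    σ * ∫ t in Ioi (1 : ℝ), t ^ (-(σ + 1)) * Int.fract t < 1 := by
  have hpow : IntegrableOn (fun t : ℝ ↦ t ^ (-(σ + 1))) (Ioi 1) :=
    integrableOn_Ioi_rpow_of_lt (by linarith) zero_lt_one
  have hfract : IntegrableOn (fun t : ℝ ↦ t ^ (-(σ + 1)) * Int.fract t) (Ioi 1) := by
    refine Integrable.mono hpow (hpow.aestronglyMeasurable.mul
      measurable_fract.aestronglyMeasurable) (ae_of_all _ fun t ↦ ?_)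
    rw [norm_mul, norm_of_nonneg (Int.fract_nonneg t)]
    exact mul_le_of_le_one_right (norm_nonneg _) (Int.fract_lt_one t).le
  have hpos : ∀ t ∈ Ioi (1 : ℝ), 0 < t ^ (-(σ + 1)) - t ^ (-(σ + 1)) * Int.fract t := by
    intro t ht
    rw [← mul_one_sub]
    exact mul_pos (rpow_pos_of_pos (zero_lt_one.trans ht) _) (sub_pos.mpr (Int.fract_lt_one t))
  have hlt : ∫ t in Ioi (1 : ℝ), t ^ (-(σ + 1)) * Int.fract t < 1 / σ := by
    have hint : ∫ t in Ioi (1 : ℝ), t ^ (-(σ + 1)) = 1 / σ := by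
      rw [integral_Ioi_rpow_of_lt (by linarith) zero_lt_one, one_rpow,
        show -(σ + 1) + 1 = -σ by ring, div_neg, neg_div, neg_neg]
    rw [← hint, ← sub_pos, ← integral_sub hpow hfract,
      setIntegral_pos_iff_support_of_nonneg_ae
        ((ae_restrict_iff' measurableSet_Ioi).mpr (ae_of_all _ fun t ht ↦ (hpos t ht).le))
        (hpow.sub hfract),
      inter_eq_right.mpr fun t ht ↦ Function.mem_support.mpr (hpos t ht).ne', Real.volume_Ioi]
    exact ENNReal.zero_lt_top
  calc σ * ∫ t in Ioi (1 : ℝ), t ^ (-(σ + 1)) * Int.fract t < σ * (1 / σ) := by gcongr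
    _ = 1 := mul_one_div_cancel hσ.ne'

lemma riemannZeta_ofReal_eq {σ : ℝ} (hσ : 0 < σ) (hσ1 : σ ≠ 1) :
    riemannZeta σ =
      ((σ / (σ - 1) - σ * ∫ t in Ioi (1 : ℝ), t ^ (-(σ + 1)) * Int.fract t : ℝ) : ℂ) := by
  rw [riemannZeta_eq_div_sub_mul_fractIntegral (by simpa using hσ) (by exact_mod_cast hσ1),
    fractIntegral_ofReal]
  push_cast
  rfl

/-- for `0 < A < 1`, the Riemann zeta value `ζ(1 - A)` is real and
satisfies `-1 < A * ζ(1 - A) < 0`. -/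
theorem stmt16
    (A : ℝ) (hA0 : 0 < A) (hA1 : A < 1) :
    (riemannZeta (1 - (A : ℂ))).im = 0 ∧
    -1 < A * (riemannZeta (1 - (A : ℂ))).re ∧
    A * (riemannZeta (1 - (A : ℂ))).re < 0 := by
  set I := ∫ t in Ioi (1 : ℝ), t ^ (-(1 - A + 1)) * Int.fract t
  have hσ : 0 < 1 - A := by linarith
  have hI_nonneg : 0 ≤ I := setIntegral_nonneg measurableSet_Ioi fun t ht ↦
    mul_nonneg (rpow_nonneg (zero_lt_one.trans ht).le _) (Int.fract_nonneg t)
  have hI_lt : (1 - A) * I < 1 := mul_integral_rpow_mul_fract_lt_one hσ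
  have hζ := riemannZeta_ofReal_eq hσ (by linarith)
  have hAζ : A * ((1 - A) / (1 - A - 1) - (1 - A) * I) = -(1 - A) - A * ((1 - A) * I) := by
    rw [sub_sub_cancel_left, div_neg, mul_sub, mul_neg, mul_div_cancel₀ _ hA0.ne']
  rw [show 1 - (A : ℂ) = ((1 - A : ℝ) : ℂ) by push_cast; rfl, hζ, ofReal_im, ofReal_re, hAζ]
  exact ⟨rfl, by nlinarith, by nlinarith⟩
end

section
/- Let m > 0, X > 0, and let g : [0,X] → ℝ be continuous and positive. Define z : [0,X] → ℝ by z(x) := ((m/(m+1)) · ∫_0^x g(t)^{1/(m+1)} dt)^{(m+1)/m}. Then z(0) = 0, z is differentiable on (0,X), and z'(x) = (g(x) · z(x))^{1/(m+1)} for all x ∈ (0,X). -/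
open Real Set intervalIntegral

/-! With `c = m/(m+1)` and `F x = ∫₀ˣ g^{1/(m+1)}`, the chain rule gives
`((c F)^{(m+1)/m})' = F' · (c F)^{1/m} = g^{1/(m+1)} · (c F)^{1/m}`, and the right-hand side is
`(g · (c F)^{(m+1)/m})^{1/(m+1)}` since `(m+1)/m · 1/(m+1) = 1/m`. Positivity of `g` makes
`F x > 0` for `x > 0`, which is what allows differentiating the real power there. -/

theorem hasDerivAt_integral_of_continuousOn_Icc {E : Type*} [NormedAddCommGroup E]
    [NormedSpace ℝ E] [CompleteSpace E] {f : ℝ → E} {a b x : ℝ}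
    (hf : ContinuousOn f (Icc a b)) (hx : x ∈ Ioo a b) :
    HasDerivAt (fun y => ∫ t in a..y, f t) (f x) x := by
  have hint : IntervalIntegrable f MeasureTheory.volume a x :=
    (hf.mono (Icc_subset_Icc le_rfl hx.2.le)).intervalIntegrable_of_Icc hx.1.le
  exact integral_hasDerivAt_right hint
    ((hf.mono Ioo_subset_Icc_self).stronglyMeasurableAtFilter isOpen_Ioo x hx)
    (hf.continuousAt (Icc_mem_nhds hx.1 hx.2))

theorem hasDerivAt_mul_rpow_div {m f' x : ℝ} {F : ℝ → ℝ} (hm : 0 < m)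
    (hF : HasDerivAt F f' x) (hFx : 0 < F x) :
    HasDerivAt (fun y => (m / (m + 1) * F y) ^ ((m + 1) / m))
      (f' * (m / (m + 1) * F x) ^ (1 / m)) x := by
  have hcF : 0 < m / (m + 1) * F x := by positivity
  convert (hF.const_mul (m / (m + 1))).rpow_const (p := (m + 1) / m) (Or.inl hcF.ne') using 1
  have hexp : (m + 1) / m - 1 = 1 / m := by field_simp; ring
  rw [hexp]
  field_simp

theorem mul_rpow_div_rpow_inv {m a w : ℝ} (hm : 0 < m) (ha : 0 ≤ a) (hw : 0 ≤ w) :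
    (a * w ^ ((m + 1) / m)) ^ (1 / (m + 1)) = a ^ (1 / (m + 1)) * w ^ (1 / m) := by
  have hexp : (m + 1) / m * (1 / (m + 1)) = 1 / m := by field_simp
  rw [mul_rpow ha (rpow_nonneg hw _), ← rpow_mul hw, hexp]

theorem stmt17_general
    (m X : ℝ) (hm : 0 < m)
    (g : ℝ → ℝ)
    (hgcont : ContinuousOn g (Set.Icc 0 X))
    (hgpos : ∀ x ∈ Set.Icc (0 : ℝ) X, 0 < g x)
    (z : ℝ → ℝ)
    (hz : ∀ x : ℝ, z x =
      ((m / (m + 1)) * ∫ t in (0 : ℝ)..x, g t ^ (1 / (m + 1))) ^ ((m + 1) / m)) :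
    z 0 = 0 ∧ ∀ x ∈ Set.Ioo (0 : ℝ) X, HasDerivAt z ((g x * z x) ^ (1 / (m + 1))) x := by
  have hroot : ContinuousOn (fun t => g t ^ (1 / (m + 1))) (Icc 0 X) :=
    hgcont.rpow_const fun t ht => Or.inl (hgpos t ht).ne'
  refine ⟨by simp [hz, zero_rpow (by positivity : (m + 1) / m ≠ 0)], fun x hx => ?_⟩
  have hgx : 0 < g x := hgpos x (Ioo_subset_Icc_self hx)
  have hintegral_pos : 0 < ∫ t in (0 : ℝ)..x, g t ^ (1 / (m + 1)) :=
    intervalIntegral_pos_of_pos_on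
      ((hroot.mono (Icc_subset_Icc le_rfl hx.2.le)).intervalIntegrable_of_Icc hx.1.le)
      (fun t ht => rpow_pos_of_pos (hgpos t ⟨ht.1.le, ht.2.le.trans hx.2.le⟩) _) hx.1
  rw [hz x, funext hz, mul_rpow_div_rpow_inv hm hgx.le (by positivity)]
  exact hasDerivAt_mul_rpow_div hm (hasDerivAt_integral_of_continuousOn_Icc hroot hx)
    hintegral_pos

/-- closed-form solution of the separable ODE
`z' = (g z)^(1/(m+1))` with `z 0 = 0`. -/
theorem stmt17
    (m X : ℝ) (hm : 0 < m) (hX : 0 < X)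
    (g : ℝ → ℝ)
    (hgcont : ContinuousOn g (Set.Icc 0 X))
    (hgpos : ∀ x ∈ Set.Icc (0 : ℝ) X, 0 < g x)
    (z : ℝ → ℝ)
    (hz : ∀ x : ℝ, z x =
      ((m / (m + 1)) * ∫ t in (0 : ℝ)..x, g t ^ (1 / (m + 1))) ^ ((m + 1) / m)) :
    z 0 = 0 ∧ ∀ x ∈ Set.Ioo (0 : ℝ) X, HasDerivAt z ((g x * z x) ^ (1 / (m + 1))) x :=
  stmt17_general m X hm g hgcont hgpos z hz
end
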